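/- arXiv:2210.12576 — 3 statements merged into one kernel-verified Lean document; each statement's English description precedes it below -/
import Mathlib

section
/- Let D be a positive integer. Then there do not exist four distinct integers n₁, n₂, n₃, n₄ in geometric progression (i.e. there is a nonzero rational r with n₂ = n₁ r, n₃ = n₁ r², n₄ = n₁ r³) such that each nᵢ is of the form D m² + δ for some positive integer m and some δ ∈ {2, −2}. -/
set_option maxHeartbeats 1000000
set_option linter.unusedVariables false
set_option maxHeartbeats 1000000
private lemma caseA (b p q h : ℤ) (hb : 1 ≤ b) (hq : 2 ≤ q) (hqp : q < p)
    (hh : 1 ≤ h) (hA : 2*h + 1 ≤ b*p^2*q)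
    (master : 2*(h^2-1) = b*p*(2*p*q*h - p^2 - q^2)) : False := by
  have hp3 : 3 ≤ p := by omega
  have hbp : (0:ℤ) < b*p := mul_pos (by omega) (by omega)
  have hpq : (0:ℤ) < p*q := mul_pos (by omega) (by omega)
  -- h ≥ 2
  have hh2 : 2 ≤ h := by
    rcases (by omega : h = 1 ∨ 2 ≤ h) with h1 | h2
    · exfalso
      subst h1
      have hY0 : b*p*(2*p*q*1 - p^2 - q^2) = 0 := by linarith
      have hY : 2*p*q*1 - p^2 - q^2 = 0 := by
        rcases mul_eq_zero.mp hY0 with h' | h'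
        · exact absurd h' (by omega)
        · exact h'
      nlinarith [sq_nonneg (p - q)]
    · exact h2
  -- Y ≥ 1
  have hY1 : 1 ≤ 2*p*q*h - p^2 - q^2 := by
    by_contra hc
    push_neg at hc
    have h0 : b*p*(2*p*q*h - p^2 - q^2) ≤ 0 :=
      mul_nonpos_of_nonneg_of_nonpos (le_of_lt hbp) (by omega)
    nlinarith
  have hq2 : q^2 < p^2 := by nlinarith
  have hq24 : 4 ≤ q^2 := by nlinarith
  -- second factor lower bound
  have h2h : 2*h ≤ b*p^2*q - 1 := by omega
  have hsec : 3*p^3 ≤ 2*b*p^3*q^2 - 2*p*q*h - p^2 - q^2 := by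
    have hmul : (p*q)*(2*h) ≤ (p*q)*(b*p^2*q - 1) :=
      mul_le_mul_of_nonneg_left h2h (le_of_lt hpq)
    have e1 : 4*p^3 ≤ b*p^3*q^2 := by
      have : (1:ℤ)*4 ≤ b*q^2 := mul_le_mul hb hq24 (by norm_num) (by omega)
      nlinarith [this, pow_pos (show (0:ℤ) < p by omega) 3]
    nlinarith [hmul, e1]
  -- Vieta product
  have hY2 : (2*p*q*h - p^2 - q^2) * (2*b*p^3*q^2 - 2*p*q*h - p^2 - q^2) = (p^2-q^2)^2 := by
    linear_combination (-2*p^2*q^2) * master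
  -- 3Y < p
  have h3Y : 3*(2*p*q*h - p^2 - q^2) < p := by
    have h1 : (3*p^3) * (2*p*q*h - p^2 - q^2) ≤ (p^2-q^2)^2 := by
      calc (3*p^3) * (2*p*q*h - p^2 - q^2)
          ≤ (2*b*p^3*q^2 - 2*p*q*h - p^2 - q^2) * (2*p*q*h - p^2 - q^2) :=
            mul_le_mul_of_nonneg_right hsec (by linarith)
        _ = (p^2-q^2)^2 := by rw [mul_comm]; exact hY2
    have hA1 : 0 < p^2 - q^2 := by omega
    have h2 : (p^2-q^2)^2 < p^3*p := by nlinarith [mul_lt_mul_of_pos_right (show p^2 - q^2 < p^2 by omega) hA1]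
    have h4 : p^3 * (3*(2*p*q*h - p^2 - q^2)) < p^3 * p := by nlinarith [h1, h2]
    exact lt_of_mul_lt_mul_left h4 (by positivity)
  -- M ≥ 1
  have hM1 : 1 ≤ 2*q*h - p := by
    by_contra hc
    push_neg at hc
    have h0 : p*(2*q*h - p) ≤ 0 := mul_nonpos_of_nonneg_of_nonpos (by omega) (by omega)
    nlinarith
  -- M ≤ q
  have hMq : 2*q*h - p ≤ q := by
    by_contra hc
    push_neg at hc
    have h0 : p*(q+1) ≤ p*(2*q*h-p) := mul_le_mul_of_nonneg_left (by omega) (by omega)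
    nlinarith
  -- final inequalities
  have hMid : (2*q*h - 2*q)*(2*q*h + 2*q) = 2*b*p*q^2*(2*p*q*h - p^2 - q^2) := by
    linear_combination (2*q^2) * master
  have e3 : 2*p*q^2 ≤ 2*b*p*q^2*(2*p*q*h-p^2-q^2) := by
    have : (1:ℤ)*1 ≤ b*(2*p*q*h-p^2-q^2) := mul_le_mul hb hY1 (by norm_num) (by omega)
    nlinarith [this, mul_pos hpq (show (0:ℤ) < q by omega)]
  have e4 : (2*q*h-2*q)*(2*q*h+2*q) ≤ (p-q)*(p+3*q) := by
    have f1 : 2*q*h - 2*q ≤ p - q := by linarith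
    have f2 : 2*q*h + 2*q ≤ p + 3*q := by linarith
    have f3 : (0:ℤ) ≤ 2*q*h - 2*q := by nlinarith
    exact mul_le_mul f1 f2 (by linarith) (by linarith)
  have hfin1 : 2*p*q^2 ≤ p^2 + 2*p*q - 3*q^2 := by nlinarith [hMid, e3, e4]
  have e5 : p ≤ (2*p*q*h - p^2 - q^2) + q^2 := by
    nlinarith [mul_le_mul_of_nonneg_left hM1 (show (0:ℤ) ≤ p by omega)]
  have hfin2 : 2*p < 3*q^2 := by linarith
  have e6 : 2*p*p < 3*q^2*p := mul_lt_mul_of_pos_right hfin2 (by omega)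
  have e7 : q*(p*q + 6*q) < q*(4*p) := by nlinarith [hfin1, e6]
  have e8 : p*q + 6*q < 4*p := lt_of_mul_lt_mul_left e7 (by omega)
  have hq3 : q ≤ 3 := by nlinarith
  interval_cases q <;> omega


private lemma caseB (b p q h : ℤ) (hb : 1 ≤ b) (hq : 2 ≤ q) (hqp : q < p)
    (hqndvd : ¬ q ∣ p) (hh : 1 ≤ h)
    (master : 2*(h^2-1) = b*p*(p^2 + q^2 - 2*p*q*h)) : False := by
  have hp3 : 3 ≤ p := by omega
  have hbp : (0:ℤ) < b*p := mul_pos (by omega) (by omega)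
  have hh2 : 2 ≤ h := by
    rcases (by omega : h = 1 ∨ 2 ≤ h) with h1 | h2
    · exfalso
      subst h1
      have hY0 : b*p*(p^2 + q^2 - 2*p*q*1) = 0 := by linarith
      have hY : p^2 + q^2 - 2*p*q*1 = 0 := by
        rcases mul_eq_zero.mp hY0 with h' | h'
        · exact absurd h' (by omega)
        · exact h'
      nlinarith [sq_nonneg (p - q)]
    · exact h2
  have hY1 : 1 ≤ p^2 + q^2 - 2*p*q*h := by
    by_contra hc
    push_neg at hc
    have h0 : b*p*(p^2 + q^2 - 2*p*q*h) ≤ 0 :=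
      mul_nonpos_of_nonneg_of_nonpos (le_of_lt hbp) (by omega)
    nlinarith
  have hq2 : q^2 < p^2 := by nlinarith
  -- qh < p
  have hqh : q*h < p := by
    have e1 : (2*p)*(q*h) < (2*p)*p := by nlinarith
    exact lt_of_mul_lt_mul_left e1 (by omega)
  have h2hp : 2*h ≤ p - 1 := by nlinarith
  -- 2Y < p
  have h2Y : 2*(p^2 + q^2 - 2*p*q*h) < p := by
    have e1 : 2*(b*p*(p^2+q^2-2*p*q*h)) = 4*h^2 - 4 := by linarith
    have e2 : 4*h^2 ≤ (p-1)^2 := by nlinarith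
    have e3 : p*(2*(p^2+q^2-2*p*q*h)) ≤ b*p*(2*(p^2+q^2-2*p*q*h)) := by
      have : (1:ℤ)*(p*(2*(p^2+q^2-2*p*q*h))) ≤ b*(p*(2*(p^2+q^2-2*p*q*h))) :=
        mul_le_mul_of_nonneg_right hb (by nlinarith)
      nlinarith [this]
    have e4 : p*(2*(p^2+q^2-2*p*q*h)) < p*p := by nlinarith
    exact lt_of_mul_lt_mul_left e4 (by omega)
  -- M := 2qh - p ; YB = q² - pM
  have hYM : p^2 + q^2 - 2*p*q*h = q^2 - p*(2*q*h-p) := by ring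
  rcases (by omega : 2*q*h - p ≤ -1 ∨ 2*q*h - p = 0 ∨ 1 ≤ 2*q*h - p) with hM | hM | hM
  · -- M ≤ -1 : YB ≥ q² + p contradicts 2Y < p
    have : p*(2*q*h-p) ≤ p*(-1) := mul_le_mul_of_nonneg_left hM (by omega)
    nlinarith
  · exact hqndvd ⟨2*h, by linear_combination -hM⟩
  · -- M ≥ 1
    have hpM : p*(2*q*h-p) ≤ q^2 - 1 := by nlinarith
    have hple : p ≤ q^2 - 1 := by nlinarith [mul_le_mul_of_nonneg_left hM (show (0:ℤ) ≤ p by omega)]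
    have hMq : 2*q*h - p ≤ q - 1 := by
      by_contra hc
      push_neg at hc
      have : p*q ≤ p*(2*q*h-p) := mul_le_mul_of_nonneg_left (by omega) (by omega)
      nlinarith
    -- h ≥ q
    have hhq : q ≤ h := by
      by_contra hc
      push_neg at hc
      have hf : (0:ℤ) ≤ (h-2)*(q-1-h) := mul_nonneg (by omega) (by omega)
      -- p ≤ bpY = 2(h²-1), p ≥ 2qh - (q-1)
      have e1 : p*1 ≤ p*(b*(p^2+q^2-2*p*q*h)) := by
        apply mul_le_mul_of_nonneg_left _ (by omega)
        nlinarith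
      nlinarith [e1]
    nlinarith


private lemma caseC (b p q h : ℤ) (hb : 1 ≤ b) (hq : 2 ≤ q) (hqp : q < p)
    (hqndvd : ¬ q ∣ p) (hh : 1 ≤ h) (hA : 2*h + 1 ≤ b*p^2*q)
    (master : 2*(h^2+1) = b*p*(2*p*q*h - p^2 + q^2)) : False := by
  have hp3 : 3 ≤ p := by omega
  have hbp : (0:ℤ) < b*p := mul_pos (by omega) (by omega)
  have hY1 : 1 ≤ 2*p*q*h - p^2 + q^2 := by
    by_contra hc
    push_neg at hc
    have h0 : b*p*(2*p*q*h - p^2 + q^2) ≤ 0 :=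
      mul_nonpos_of_nonneg_of_nonpos (le_of_lt hbp) (by omega)
    nlinarith
  have hq2 : q^2 < p^2 := by nlinarith
  have hq4 : (4:ℤ) ≤ q^2 := by nlinarith
  have hbpq2 : 12 ≤ b*p*q^2 := by
    have h34 : (12:ℤ) ≤ p*q^2 := by nlinarith
    have h35 : 1*(p*q^2) ≤ b*(p*q^2) := mul_le_mul_of_nonneg_right hb (by positivity)
    nlinarith
  -- hq ≤ p
  have hhq : h*q ≤ p := by
    have e1 : 4*(b*p^2*q)*h - 4*h^2 = 2*b*p^3 - 2*b*p*q^2 + 4 := by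
      linear_combination (-2 : ℤ)*master
    have e2 : 2*h*(b*p^2*q) ≤ 2*b*p^3 - 2*b*p*q^2 + 4 := by nlinarith
    have e3 : (2*b*p^2)*(h*q) ≤ (2*b*p^2)*p := by nlinarith
    exact le_of_mul_le_mul_left e3 (by positivity)
  rcases (by omega : 2*q*h - p ≤ -1 ∨ 2*q*h - p = 0 ∨ 1 ≤ 2*q*h - p) with hM | hM | hM
  · -- M ≤ -1
    have hm1 : 1 ≤ p - 2*q*h := by omega
    have hpm : p*(p - 2*q*h) ≤ q^2 - 1 := by nlinarith
    have hple : p ≤ q^2 - 1 := by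
      nlinarith [mul_le_mul_of_nonneg_left hm1 (show (0:ℤ) ≤ p by omega)]
    have e1 : 4*q^2*h^2 ≤ (p-1)^2 := by nlinarith
    have e2 : 2*q^2*(b*p*(2*p*q*h - p^2 + q^2)) = 4*q^2*h^2 + 4*q^2 := by
      linear_combination (-2*q^2)*master
    have e3 : 2*q^2*p ≤ 2*q^2*(b*p*(2*p*q*h - p^2 + q^2)) := by
      have f0 : (1:ℤ)*1 ≤ b*(2*p*q*h - p^2 + q^2) := mul_le_mul hb hY1 (by norm_num) (by omega)
      nlinarith [f0, mul_pos (show (0:ℤ) < 2*q^2 by positivity) (show (0:ℤ) < p by omega)]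
    have hp4 : p*(q^2+1) < 4*q^2 := by nlinarith
    have hple3 : p ≤ 3 := by
      by_contra hc
      push_neg at hc
      have : 4*(q^2+1) ≤ p*(q^2+1) := mul_le_mul_of_nonneg_right (by omega) (by positivity)
      linarith
    have hpe : p = 3 := by omega
    have hqe : q = 2 := by omega
    subst hpe; subst hqe
    omega
  · exact hqndvd ⟨2*h, by linear_combination -hM⟩
  · -- M ≥ 1
    have hYbig : q^2 + p ≤ 2*p*q*h - p^2 + q^2 := by
      nlinarith [mul_le_mul_of_nonneg_left hM (show (0:ℤ) ≤ p by omega)]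
    have e1 : q^2*h^2 ≤ p^2 := by nlinarith [mul_le_mul hhq hhq (by positivity) (by omega)]
    have e2 : q^2*(b*p*(2*p*q*h - p^2 + q^2)) = 2*(q^2*h^2) + 2*q^2 := by
      linear_combination (-q^2)*master
    have e3 : q^2*(p*(q^2+p)) ≤ q^2*(b*p*(2*p*q*h - p^2 + q^2)) := by
      have f1 : p*(q^2+p) ≤ b*(p*(2*p*q*h - p^2 + q^2)) := by
        have f2 : p*(q^2+p) ≤ p*(2*p*q*h - p^2 + q^2) :=
          mul_le_mul_of_nonneg_left hYbig (by omega)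
        have f3 : 1*(p*(2*p*q*h - p^2 + q^2)) ≤ b*(p*(2*p*q*h - p^2 + q^2)) :=
          mul_le_mul_of_nonneg_right hb (by nlinarith)
        linarith
      nlinarith [mul_le_mul_of_nonneg_left f1 (show (0:ℤ) ≤ q^2 by positivity)]
    have g1 : 4*p^2 ≤ p^2*q^2 := by nlinarith [mul_le_mul_of_nonneg_left hq4 (show (0:ℤ) ≤ p^2 by positivity)]
    have g2 : 4*q^2 ≤ q^2*q^2 := by nlinarith [mul_le_mul_of_nonneg_right hq4 (show (0:ℤ) ≤ q^2 by positivity)]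
    have g3 : 12*q^2 ≤ p*(q^2*q^2) := by
      have : 3*(q^2*q^2) ≤ p*(q^2*q^2) := mul_le_mul_of_nonneg_right (by omega) (by positivity)
      nlinarith
    nlinarith [e1, e2, e3, g1, g3]


private lemma caseD (b p q h : ℤ) (hb : 1 ≤ b) (hq : 2 ≤ q) (hqp : q < p)
    (hqndvd : ¬ q ∣ p) (hh : 1 ≤ h)
    (master : 2*(h^2+1) = b*p*(p^2 - q^2 - 2*p*q*h)) : False := by
  have hp3 : 3 ≤ p := by omega
  have hbp : (0:ℤ) < b*p := mul_pos (by omega) (by omega)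
  have hY1 : 1 ≤ p^2 - q^2 - 2*p*q*h := by
    by_contra hc
    push_neg at hc
    have h0 : b*p*(p^2 - q^2 - 2*p*q*h) ≤ 0 :=
      mul_nonpos_of_nonneg_of_nonpos (le_of_lt hbp) (by omega)
    nlinarith
  have hq4 : (4:ℤ) ≤ q^2 := by nlinarith
  have h2qh : 2*q*h < p := by
    have e1 : p*(2*q*h) < p*p := by nlinarith
    exact lt_of_mul_lt_mul_left e1 (by omega)
  have hN1 : 1 ≤ p - 2*q*h := by omega
  have hD2 : 2*q^2*(b*p*(p^2 - q^2 - 2*p*q*h)) = (2*q*h)^2 + 4*q^2 := by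
    linear_combination (-2*q^2)*master
  rcases lt_trichotomy p (q^2) with hpq2 | hpq2 | hpq2
  · -- p < q²
    have hY1' : p^2 - q^2 - 2*p*q*h = 1 := by
      by_contra hc
      have hY2' : 2 ≤ p^2 - q^2 - 2*p*q*h := by omega
      have e1 : 4*q^2*p ≤ 2*q^2*(b*p*(p^2 - q^2 - 2*p*q*h)) := by
        have f2 : p*2 ≤ p*(p^2 - q^2 - 2*p*q*h) := mul_le_mul_of_nonneg_left hY2' (by omega)
        have f3 : 1*(p*(p^2 - q^2 - 2*p*q*h)) ≤ b*(p*(p^2 - q^2 - 2*p*q*h)) :=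
          mul_le_mul_of_nonneg_right hb (by nlinarith)
        nlinarith [mul_le_mul_of_nonneg_left (show 2*p ≤ b*(p*(p^2 - q^2 - 2*p*q*h)) by linarith)
          (show (0:ℤ) ≤ 2*q^2 by positivity)]
      have hqh0 : (0:ℤ) ≤ 2*q*h := by nlinarith
      have e2 : (2*q*h)^2 < p^2 := by
        nlinarith [mul_lt_mul' (le_of_lt h2qh) h2qh hqh0 (show (0:ℤ) < p by omega)]
      have e3 : p^2 ≤ p*q^2 := by
        nlinarith [mul_le_mul_of_nonneg_left (le_of_lt hpq2) (show (0:ℤ) ≤ p by omega)]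
      nlinarith [e1, e2, e3, hD2,
        mul_pos (show (0:ℤ) < q^2 by positivity) (show (0:ℤ) < 3*p - 4 by omega)]
    have hD2' : (2*q^2)*(b*p) = (2*q^2)*(2*h^2+2) := by
      have h0 := hD2
      rw [hY1'] at h0
      nlinarith [h0]
    have hbpe : b*p = 2*h^2+2 := mul_left_cancel₀ (by positivity) hD2'
    have hpN : p*(p - 2*q*h) = q^2 + 1 := by linear_combination hY1'
    have hhq : q ≤ h := by
      by_contra hc
      push_neg at hc
      have f1 : 2*h*1 ≤ 2*h*(q-h) := mul_le_mul_of_nonneg_left (by omega) (by omega)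
      have f2 : p*1 ≤ p*b := mul_le_mul_of_nonneg_left hb (by omega)
      nlinarith [hbpe, f1, f2, hN1]
    have f3 : 2*q^2 ≤ 2*q*h := by nlinarith [hhq]
    have f4 : p*1 ≤ p*(p - 2*q*h) := mul_le_mul_of_nonneg_left hN1 (by omega)
    nlinarith [f3, f4, hpN, hN1, hq4]
  · exact hqndvd ⟨q, by linear_combination hpq2⟩
  · -- q² < p : N = 1
    have hNe : p - 2*q*h = 1 := by
      by_contra hc
      have hN2 : 2 ≤ p - 2*q*h := by omega
      have hYbig : p + 1 ≤ p^2 - q^2 - 2*p*q*h := by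
        nlinarith [mul_le_mul_of_nonneg_left hN2 (show (0:ℤ) ≤ p by omega)]
      have e1 : 2*q^2*(p*(p+1)) ≤ 2*q^2*(b*p*(p^2 - q^2 - 2*p*q*h)) := by
        have f2 : p*(p+1) ≤ p*(p^2 - q^2 - 2*p*q*h) := mul_le_mul_of_nonneg_left hYbig (by omega)
        have f3 : 1*(p*(p^2 - q^2 - 2*p*q*h)) ≤ b*(p*(p^2 - q^2 - 2*p*q*h)) :=
          mul_le_mul_of_nonneg_right hb (by nlinarith)
        nlinarith [mul_le_mul_of_nonneg_left
          (show p*(p+1) ≤ b*(p*(p^2 - q^2 - 2*p*q*h)) by linarith)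
          (show (0:ℤ) ≤ 2*q^2 by positivity)]
      have hqh0 : (0:ℤ) ≤ 2*q*h := by nlinarith
      have e2 : (2*q*h)^2 ≤ (p-2)^2 := by
        nlinarith [mul_le_mul (show 2*q*h ≤ p-2 by omega) (show 2*q*h ≤ p-2 by omega) hqh0 (show (0:ℤ) ≤ p-2 by omega)]
      nlinarith [e1, e2, hq4, hD2]
    have h2qh' : 2*q*h = p - 1 := by omega
    have hYe' : p^2 - q^2 - 2*p*q*h = p - q^2 := by nlinarith [hNe]
    have heqn : 2*q^2*(b*p*(p - q^2)) = (p-1)^2 + 4*q^2 := by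
      have h0 := hD2
      rw [hYe', h2qh'] at h0
      linarith
    have hdvd : p ∣ 4*q^2 + 1 := ⟨2*q^2*(b*(p - q^2)) - p + 2, by linear_combination -heqn⟩
    rcases (by omega : p - q^2 = 1 ∨ 2 ≤ p - q^2) with hc1 | hc2
    · have h3 : p ∣ 3 := by
        have h1 : (3:ℤ) = 4*p - (4*q^2+1) := by omega
        rw [h1]
        exact dvd_sub ⟨4, by ring⟩ hdvd
      have := Int.le_of_dvd (by norm_num) h3
      omega
    · have f2 : p*2 ≤ p*(p - q^2) := mul_le_mul_of_nonneg_left hc2 (by omega)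
      have f3 : 1*(p*(p - q^2)) ≤ b*(p*(p - q^2)) := mul_le_mul_of_nonneg_right hb (by nlinarith)
      have f4 : 2*q^2*(2*p) ≤ 2*q^2*(b*(p*(p - q^2))) :=
        mul_le_mul_of_nonneg_left (by linarith) (by positivity)
      have f5 : 4*q^2*p ≤ (p-1)^2 + 4*q^2 := by nlinarith [heqn, f4]
      have f6 : (p-1)*(4*q^2) ≤ (p-1)*(p-1) := by nlinarith [f5]
      have hpge : 4*q^2 ≤ p - 1 := le_of_mul_le_mul_left f6 (by omega)
      have hple : p ≤ 4*q^2+1 := Int.le_of_dvd (by positivity) hdvd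
      have hpe : p = 4*q^2+1 := by omega
      subst hpe
      have hfin : (2*q^2*(4*q^2+1)) * (b*(3*q^2+1)) = (2*q^2*(4*q^2+1)) * 2 := by
        linear_combination heqn
      have h2e : b*(3*q^2+1) = 2 := mul_left_cancel₀ (by positivity) hfin
      nlinarith [h2e]


private lemma partI (b D p q m2 m4 d2 d4 : ℤ) (hb : 1 ≤ b) (hD : 1 ≤ D)
    (hq : 2 ≤ q) (hqp : q < p) (hqndvd : ¬ q ∣ p)
    (hd2 : d2 = 2 ∨ d2 = -2) (hd4 : d4 = 2 ∨ d4 = -2)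
    (hm2 : 1 ≤ m2) (hm4 : 1 ≤ m4)
    (H2 : D*m2^2 = b*q^2*p - d2) (H4 : D*m4^2 = b*p^3 - d4) : False := by
  have hp3 : 3 ≤ p := by omega
  have hV1 : 1 ≤ D*m2*m4 := by
    have h0 : 0 < D*m2*m4 := mul_pos (mul_pos (by omega) (by omega)) (by omega)
    linarith
  have key : (D*m2*m4)^2 = (b*q^2*p - d2)*(b*p^3 - d4) := by
    have h0 : (D*m2*m4)^2 = (D*m2^2)*(D*m4^2) := by ring
    rw [H2, H4] at h0
    exact h0
  have hA0 : 0 < b*p^2*q := mul_pos (mul_pos (by omega) (by positivity)) (by omega)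
  have hq2 : q^2 < p^2 := by nlinarith
  have hq4 : (4:ℤ) ≤ q^2 := by nlinarith
  have hbq2p : 12 ≤ b*q^2*p := by
    have h1 : (12:ℤ) ≤ q^2*p := by nlinarith
    have h2 : 1*(q^2*p) ≤ b*(q^2*p) := mul_le_mul_of_nonneg_right hb (by nlinarith)
    nlinarith
  have hbp3 : 27 ≤ b*p^3 := by
    have h1 : (27:ℤ) ≤ p^3 := by nlinarith
    have h2 : 1*(p^3) ≤ b*(p^3) := mul_le_mul_of_nonneg_right hb (by nlinarith)
    nlinarith
  have hbpq : 15 ≤ b*p*(p^2 - q^2) := by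
    have h5 : 5 ≤ p^2 - q^2 := by nlinarith
    have h6 : 15 ≤ p*(p^2 - q^2) := by nlinarith
    have h7 : 1*(p*(p^2 - q^2)) ≤ b*(p*(p^2 - q^2)) :=
      mul_le_mul_of_nonneg_right hb (by nlinarith)
    nlinarith
  rcases hd2 with rfl | rfl <;> rcases hd4 with rfl | rfl
  · -- d2 = 2, d4 = 2 : case A
    have hAV : D*m2*m4 < b*p^2*q := by
      by_contra hc
      push_neg at hc
      have h1 : (b*p^2*q)^2 ≤ (D*m2*m4)^2 := by
        nlinarith [mul_le_mul hc hc (le_of_lt hA0) (show (0:ℤ) ≤ D*m2*m4 by linarith)]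
      nlinarith [key, h1]
    obtain ⟨h, hh⟩ : Even (b*p^2*q - D*m2*m4) := by
      have h2' : Even ((b*p^2*q - D*m2*m4)*(b*p^2*q + D*m2*m4)) :=
        ⟨b*q^2*p + b*p^3 - 2, by linear_combination -key⟩
      rcases Int.even_mul.mp h2' with he | he
      · exact he
      · obtain ⟨r, hr⟩ := he
        exact ⟨r - D*m2*m4, by linarith⟩
    have hh1 : 1 ≤ h := by linarith
    have e : b*p^2*q - 2*h = D*m2*m4 := by linarith
    have keyh : (b*p^2*q - 2*h)^2 = (b*q^2*p - 2)*(b*p^3 - 2) := by rw [e]; exact key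
    have master2 : 2*(2*(h^2-1) - b*p*(2*p*q*h - p^2 - q^2)) = 0 := by linear_combination keyh
    exact caseA b p q h hb hq hqp hh1 (by linarith) (by linarith)
  · -- d2 = 2, d4 = -2 : case C
    have hAV : D*m2*m4 < b*p^2*q := by
      by_contra hc
      push_neg at hc
      have h1 : (b*p^2*q)^2 ≤ (D*m2*m4)^2 := by
        nlinarith [mul_le_mul hc hc (le_of_lt hA0) (show (0:ℤ) ≤ D*m2*m4 by linarith)]
      nlinarith [key, h1, hbpq]
    obtain ⟨h, hh⟩ : Even (b*p^2*q - D*m2*m4) := by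
      have h2' : Even ((b*p^2*q - D*m2*m4)*(b*p^2*q + D*m2*m4)) :=
        ⟨b*p^3 - b*q^2*p + 2, by linear_combination -key⟩
      rcases Int.even_mul.mp h2' with he | he
      · exact he
      · obtain ⟨r, hr⟩ := he
        exact ⟨r - D*m2*m4, by linarith⟩
    have hh1 : 1 ≤ h := by linarith
    have e : b*p^2*q - 2*h = D*m2*m4 := by linarith
    have keyh : (b*p^2*q - 2*h)^2 = (b*q^2*p - 2)*(b*p^3 - -2) := by rw [e]; exact key
    have master2 : 2*(2*(h^2+1) - b*p*(2*p*q*h - p^2 + q^2)) = 0 := by linear_combination keyh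
    exact caseC b p q h hb hq hqp hqndvd hh1 (by linarith) (by linarith)
  · -- d2 = -2, d4 = 2 : case D
    have hAV : b*p^2*q < D*m2*m4 := by
      by_contra hc
      push_neg at hc
      have h1 : (D*m2*m4)^2 ≤ (b*p^2*q)^2 := by
        nlinarith [mul_le_mul hc hc (show (0:ℤ) ≤ D*m2*m4 by linarith) (le_of_lt hA0)]
      nlinarith [key, h1, hbpq]
    obtain ⟨h, hh⟩ : Even (D*m2*m4 - b*p^2*q) := by
      have h2' : Even ((D*m2*m4 - b*p^2*q)*(D*m2*m4 + b*p^2*q)) :=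
        ⟨b*p^3 - b*q^2*p - 2, by linear_combination key⟩
      rcases Int.even_mul.mp h2' with he | he
      · exact he
      · obtain ⟨r, hr⟩ := he
        exact ⟨r - b*p^2*q, by linarith⟩
    have hh1 : 1 ≤ h := by linarith
    have e : b*p^2*q + 2*h = D*m2*m4 := by linarith
    have keyh : (b*p^2*q + 2*h)^2 = (b*q^2*p - -2)*(b*p^3 - 2) := by rw [e]; exact key
    have master2 : 2*(2*(h^2+1) - b*p*(p^2 - q^2 - 2*p*q*h)) = 0 := by linear_combination keyh
    exact caseD b p q h hb hq hqp hqndvd hh1 (by linarith)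
  · -- d2 = -2, d4 = -2 : case B
    have hAV : b*p^2*q < D*m2*m4 := by
      by_contra hc
      push_neg at hc
      have h1 : (D*m2*m4)^2 ≤ (b*p^2*q)^2 := by
        nlinarith [mul_le_mul hc hc (show (0:ℤ) ≤ D*m2*m4 by linarith) (le_of_lt hA0)]
      nlinarith [key, h1]
    obtain ⟨h, hh⟩ : Even (D*m2*m4 - b*p^2*q) := by
      have h2' : Even ((D*m2*m4 - b*p^2*q)*(D*m2*m4 + b*p^2*q)) :=
        ⟨b*q^2*p + b*p^3 + 2, by linear_combination key⟩
      rcases Int.even_mul.mp h2' with he | he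
      · exact he
      · obtain ⟨r, hr⟩ := he
        exact ⟨r - b*p^2*q, by linarith⟩
    have hh1 : 1 ≤ h := by linarith
    have e : b*p^2*q + 2*h = D*m2*m4 := by linarith
    have keyh : (b*p^2*q + 2*h)^2 = (b*q^2*p - -2)*(b*p^3 - -2) := by rw [e]; exact key
    have master2 : 2*(2*(h^2-1) - b*p*(p^2 + q^2 - 2*p*q*h)) = 0 := by linear_combination keyh
    exact caseB b p q h hb hq hqp hqndvd hh1 (by linarith)


private lemma partII_A (b D p m2 m4 : ℤ) (hb : 1 ≤ b) (hD : 1 ≤ D) (hp : 2 ≤ p)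
    (hm2 : 1 ≤ m2) (hm4 : 1 ≤ m4)
    (H2 : D*m2^2 = b*p - 2) (H4 : D*m4^2 = b*p^3 - 2) :
    p = 3 ∧ b = 1 := by
  have hV1 : 1 ≤ D*m2*m4 := by
    have h0 : 0 < D*m2*m4 := mul_pos (mul_pos (by omega) (by omega)) (by omega)
    linarith
  have key : (D*m2*m4)^2 = (b*p - 2)*(b*p^3 - 2) := by
    have h0 : (D*m2*m4)^2 = (D*m2^2)*(D*m4^2) := by ring
    rw [H2, H4] at h0; exact h0
  have hbp : 2 ≤ b*p := by nlinarith
  have hW1 : p ≤ b*p^2 - p := by nlinarith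
  have hWR : (b*p^2 - p)^2 - (D*m2*m4)^2 = p^2 + 2*b*p - 4 := by linear_combination -key
  have hR0 : 0 < p^2 + 2*b*p - 4 := by nlinarith
  have hVW : D*m2*m4 < b*p^2 - p := by
    by_contra hc
    push_neg at hc
    have h1 : (b*p^2-p)^2 ≤ (D*m2*m4)^2 := by
      nlinarith [mul_le_mul hc hc (by linarith) (show (0:ℤ) ≤ D*m2*m4 by linarith)]
    linarith
  have hd1 : 1 ≤ (b*p^2-p) - D*m2*m4 := by linarith
  have hfac : ((b*p^2-p) - D*m2*m4)*((b*p^2-p) + D*m2*m4) = p^2+2*b*p-4 := by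
    linear_combination hWR
  have hpar : Even (p^2+2*b*p-4) ↔ Even ((b*p^2-p) - (D*m2*m4)) := by
    have h0 : Even ((b*p^2-p)^2 - (D*m2*m4)^2) ↔ Even ((b*p^2-p) - (D*m2*m4)) := by
      rw [Int.even_sub, Int.even_sub]
      simp [Int.even_pow]
    rw [hWR] at h0
    exact h0
  rcases Int.even_or_odd p with ⟨t, ht⟩ | ⟨t, ht⟩
  · -- p even
    exfalso
    have hER : Even (p^2+2*b*p-4) := ⟨2*t^2+2*b*t-2, by rw [ht]; ring⟩
    obtain ⟨s, hs⟩ := hpar.mp hER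
    have h2d : 2 ≤ (b*p^2-p) - D*m2*m4 := by omega
    have hineq : 2*((b*p^2-p) + D*m2*m4) ≤ p^2+2*b*p-4 := by
      calc 2*((b*p^2-p) + D*m2*m4)
          ≤ ((b*p^2-p) - D*m2*m4)*((b*p^2-p) + D*m2*m4) :=
            mul_le_mul_of_nonneg_right h2d (by linarith)
        _ = p^2+2*b*p-4 := hfac
    nlinarith [hineq, sq_nonneg (p-2),
      mul_nonneg (sub_nonneg.mpr hb) (mul_nonneg (show (0:ℤ) ≤ p by omega) (show (0:ℤ) ≤ p-1 by omega))]
  · -- p odd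
    have hOR : ¬ Even (p^2+2*b*p-4) := by
      rw [Int.not_even_iff_odd]
      exact ⟨2*t^2+2*t+2*b*t+b-2, by rw [ht]; ring⟩
    have hOd : ¬ Even ((b*p^2-p) - D*m2*m4) := fun h => hOR (hpar.mpr h)
    rw [Int.not_even_iff_odd] at hOd
    obtain ⟨u, hu⟩ := hOd
    rcases (by omega : u ≤ -1 ∨ u = 0 ∨ 1 ≤ u) with hc | hc | hc
    · exfalso; linarith
    · -- d = 1
      subst hc
      have hV : b*p^2 - p - 1 = D*m2*m4 := by linarith
      have keyh : (b*p^2-p-1)^2 = (b*p-2)*(b*p^3-2) := by rw [hV]; exact key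
      have hE : (p-1)*(2*b*p - p - 3) = 0 := by linear_combination -keyh
      have hp1 : 2*b*p - p - 3 = 0 := by
        rcases mul_eq_zero.mp hE with h' | h'
        · omega
        · exact h'
      have hdvd : p ∣ 3 := ⟨2*b-1, by linarith⟩
      have hp3 := Int.le_of_dvd (by norm_num) hdvd
      interval_cases p
      · omega
      · omega
    · -- d ≥ 3
      exfalso
      have h3d : 3 ≤ (b*p^2-p) - D*m2*m4 := by linarith
      have hineq : 3*((b*p^2-p) + D*m2*m4) ≤ p^2+2*b*p-4 := by
        calc 3*((b*p^2-p) + D*m2*m4)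
            ≤ ((b*p^2-p) - D*m2*m4)*((b*p^2-p) + D*m2*m4) :=
              mul_le_mul_of_nonneg_right h3d (by linarith)
          _ = p^2+2*b*p-4 := hfac
      nlinarith [hineq,
        mul_nonneg (sub_nonneg.mpr hb) (show (0:ℤ) ≤ 3*p^2-2*p by nlinarith)]


-- branch d2 = 2, d4 = -2
private lemma partII_C (b D p m2 m4 : ℤ) (hb : 1 ≤ b) (hD : 1 ≤ D) (hp : 2 ≤ p)
    (hm2 : 1 ≤ m2) (hm4 : 1 ≤ m4)
    (H2 : D*m2^2 = b*p - 2) (H4 : D*m4^2 = b*p^3 + 2) :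
    p = 2 ∧ b = 2 := by
  have hV1 : 1 ≤ D*m2*m4 := by
    have h0 : 0 < D*m2*m4 := mul_pos (mul_pos (by omega) (by omega)) (by omega)
    linarith
  have key : (D*m2*m4)^2 = (b*p - 2)*(b*p^3 + 2) := by
    have h0 : (D*m2*m4)^2 = (D*m2^2)*(D*m4^2) := by ring
    rw [H2, H4] at h0; exact h0
  have hbp : 2 ≤ b*p := by nlinarith
  have hW1 : p ≤ b*p^2 - p := by nlinarith
  have hWR : (b*p^2 - p)^2 - (D*m2*m4)^2 = p^2 - 2*b*p + 4 := by linear_combination -key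
  rcases lt_trichotomy (D*m2*m4) (b*p^2 - p) with hVW | hVW | hVW
  · -- V < W
    exfalso
    have hd1 : 1 ≤ (b*p^2-p) - D*m2*m4 := by linarith
    have hfac : ((b*p^2-p) - D*m2*m4)*((b*p^2-p) + D*m2*m4) = p^2-2*b*p+4 := by
      linear_combination hWR
    have hpar : Even (p^2-2*b*p+4) ↔ Even ((b*p^2-p) - (D*m2*m4)) := by
      have h0 : Even ((b*p^2-p)^2 - (D*m2*m4)^2) ↔ Even ((b*p^2-p) - (D*m2*m4)) := by
        rw [Int.even_sub, Int.even_sub]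
        simp [Int.even_pow]
      rw [hWR] at h0
      exact h0
    rcases Int.even_or_odd p with ⟨t, ht⟩ | ⟨t, ht⟩
    · have hER : Even (p^2-2*b*p+4) := ⟨2*t^2-2*b*t+2, by rw [ht]; ring⟩
      obtain ⟨s, hs⟩ := hpar.mp hER
      have h2d : 2 ≤ (b*p^2-p) - D*m2*m4 := by omega
      have hineq : 2*((b*p^2-p) + D*m2*m4) ≤ p^2-2*b*p+4 := by
        calc 2*((b*p^2-p) + D*m2*m4)
            ≤ ((b*p^2-p) - D*m2*m4)*((b*p^2-p) + D*m2*m4) :=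
              mul_le_mul_of_nonneg_right h2d (by linarith)
          _ = p^2-2*b*p+4 := hfac
      nlinarith [hineq, sq_nonneg (p-1),
        mul_nonneg (sub_nonneg.mpr hb) (mul_nonneg (show (0:ℤ) ≤ p by omega) (show (0:ℤ) ≤ p-1 by omega))]
    · have hOR : ¬ Even (p^2-2*b*p+4) := by
        rw [Int.not_even_iff_odd]
        exact ⟨2*t^2+2*t-2*b*t-b+2, by rw [ht]; ring⟩
      have hOd : ¬ Even ((b*p^2-p) - D*m2*m4) := fun h => hOR (hpar.mpr h)
      rw [Int.not_even_iff_odd] at hOd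
      obtain ⟨u, hu⟩ := hOd
      rcases (by omega : u ≤ -1 ∨ u = 0 ∨ 1 ≤ u) with hc | hc | hc
      · linarith
      · subst hc
        have hV : b*p^2 - p - 1 = D*m2*m4 := by linarith
        have keyh : (b*p^2-p-1)^2 = (b*p-2)*(b*p^3+2) := by rw [hV]; exact key
        have hE : 2*b*p*(p+1) = p^2+2*p+5 := by linear_combination -keyh
        have hdvd : p ∣ 5 := ⟨2*b*(p+1) - p - 2, by linear_combination -hE⟩
        have hp5 := Int.le_of_dvd (by norm_num) hdvd
        interval_cases p <;> omega
      · have h3d : 3 ≤ (b*p^2-p) - D*m2*m4 := by linarith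
        have hineq : 3*((b*p^2-p) + D*m2*m4) ≤ p^2-2*b*p+4 := by
          calc 3*((b*p^2-p) + D*m2*m4)
              ≤ ((b*p^2-p) - D*m2*m4)*((b*p^2-p) + D*m2*m4) :=
                mul_le_mul_of_nonneg_right h3d (by linarith)
            _ = p^2-2*b*p+4 := hfac
        nlinarith [hineq,
          mul_nonneg (sub_nonneg.mpr hb) (show (0:ℤ) ≤ 3*p^2+2*p by nlinarith)]
  · -- V = W : R = 0
    have hR0 : p^2 - 2*b*p + 4 = 0 := by
      rw [← hWR, hVW]; ring
    have hdvd : p ∣ 4 := ⟨2*b - p, by linear_combination hR0⟩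
    have hp4 := Int.le_of_dvd (by norm_num) hdvd
    interval_cases p <;> omega
  · -- V > W
    exfalso
    have hd1 : 1 ≤ D*m2*m4 - (b*p^2-p) := by linarith
    have hfac : (D*m2*m4 - (b*p^2-p))*(D*m2*m4 + (b*p^2-p)) = -(p^2-2*b*p+4) := by
      linear_combination -hWR
    have hineq : 1*(D*m2*m4 + (b*p^2-p)) ≤ -(p^2-2*b*p+4) := by
      calc 1*(D*m2*m4 + (b*p^2-p))
          ≤ (D*m2*m4 - (b*p^2-p))*(D*m2*m4 + (b*p^2-p)) :=
            mul_le_mul_of_nonneg_right hd1 (by linarith)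
        _ = -(p^2-2*b*p+4) := hfac
    nlinarith [hineq,
      mul_nonneg (sub_nonneg.mpr hb) (mul_nonneg (show (0:ℤ) ≤ p by omega) (show (0:ℤ) ≤ p-1 by omega))]

-- branch d2 = -2, d4 = 2 : impossible
private lemma partII_D (b D p m2 m4 : ℤ) (hb : 1 ≤ b) (hD : 1 ≤ D) (hp : 2 ≤ p)
    (hm2 : 1 ≤ m2) (hm4 : 1 ≤ m4)
    (H2 : D*m2^2 = b*p + 2) (H4 : D*m4^2 = b*p^3 - 2) : False := by
  have hV1 : 1 ≤ D*m2*m4 := by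
    have h0 : 0 < D*m2*m4 := mul_pos (mul_pos (by omega) (by omega)) (by omega)
    linarith
  have key : (D*m2*m4)^2 = (b*p + 2)*(b*p^3 - 2) := by
    have h0 : (D*m2*m4)^2 = (D*m2^2)*(D*m4^2) := by ring
    rw [H2, H4] at h0; exact h0
  have hbp : 2 ≤ b*p := by nlinarith
  have hW1 : p ≤ b*p^2 + p := by nlinarith
  have hWR : (b*p^2 + p)^2 - (D*m2*m4)^2 = p^2 + 2*b*p + 4 := by linear_combination -key
  have hR0 : 0 < p^2 + 2*b*p + 4 := by nlinarith
  have hVW : D*m2*m4 < b*p^2 + p := by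
    by_contra hc
    push_neg at hc
    have h1 : (b*p^2+p)^2 ≤ (D*m2*m4)^2 := by
      nlinarith [mul_le_mul hc hc (by linarith) (show (0:ℤ) ≤ D*m2*m4 by linarith)]
    linarith
  have hd1 : 1 ≤ (b*p^2+p) - D*m2*m4 := by linarith
  have hfac : ((b*p^2+p) - D*m2*m4)*((b*p^2+p) + D*m2*m4) = p^2+2*b*p+4 := by
    linear_combination hWR
  have hpar : Even (p^2+2*b*p+4) ↔ Even ((b*p^2+p) - (D*m2*m4)) := by
    have h0 : Even ((b*p^2+p)^2 - (D*m2*m4)^2) ↔ Even ((b*p^2+p) - (D*m2*m4)) := by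
      rw [Int.even_sub, Int.even_sub]
      simp [Int.even_pow]
    rw [hWR] at h0
    exact h0
  rcases Int.even_or_odd p with ⟨t, ht⟩ | ⟨t, ht⟩
  · have hER : Even (p^2+2*b*p+4) := ⟨2*t^2+2*b*t+2, by rw [ht]; ring⟩
    obtain ⟨s, hs⟩ := hpar.mp hER
    have h2d : 2 ≤ (b*p^2+p) - D*m2*m4 := by omega
    have hineq : 2*((b*p^2+p) + D*m2*m4) ≤ p^2+2*b*p+4 := by
      calc 2*((b*p^2+p) + D*m2*m4)
          ≤ ((b*p^2+p) - D*m2*m4)*((b*p^2+p) + D*m2*m4) :=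
            mul_le_mul_of_nonneg_right h2d (by linarith)
        _ = p^2+2*b*p+4 := hfac
    nlinarith [hineq, sq_nonneg (p-1),
      mul_nonneg (sub_nonneg.mpr hb) (mul_nonneg (show (0:ℤ) ≤ p by omega) (show (0:ℤ) ≤ p-1 by omega))]
  · have hOR : ¬ Even (p^2+2*b*p+4) := by
      rw [Int.not_even_iff_odd]
      exact ⟨2*t^2+2*t+2*b*t+b+2, by rw [ht]; ring⟩
    have hOd : ¬ Even ((b*p^2+p) - D*m2*m4) := fun h => hOR (hpar.mpr h)
    rw [Int.not_even_iff_odd] at hOd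
    obtain ⟨u, hu⟩ := hOd
    rcases (by omega : u ≤ -1 ∨ u = 0 ∨ 1 ≤ u) with hc | hc | hc
    · linarith
    · subst hc
      have hV : b*p^2 + p - 1 = D*m2*m4 := by linarith
      have keyh : (b*p^2+p-1)^2 = (b*p+2)*(b*p^3-2) := by rw [hV]; exact key
      have hE : 2*b*p*(p-1) = p^2-2*p+5 := by linear_combination -keyh
      have hdvd : p ∣ 5 := ⟨2*b*(p-1) - p + 2, by linear_combination -hE⟩
      have hp5 := Int.le_of_dvd (by norm_num) hdvd
      interval_cases p <;> omega
    · have h3d : 3 ≤ (b*p^2+p) - D*m2*m4 := by linarith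
      have hineq : 3*((b*p^2+p) + D*m2*m4) ≤ p^2+2*b*p+4 := by
        calc 3*((b*p^2+p) + D*m2*m4)
            ≤ ((b*p^2+p) - D*m2*m4)*((b*p^2+p) + D*m2*m4) :=
              mul_le_mul_of_nonneg_right h3d (by linarith)
          _ = p^2+2*b*p+4 := hfac
      nlinarith [hineq,
        mul_nonneg (sub_nonneg.mpr hb) (show (0:ℤ) ≤ 3*p^2-2*p by nlinarith)]

-- branch d2 = -2, d4 = -2 : impossible
private lemma partII_B (b D p m2 m4 : ℤ) (hb : 1 ≤ b) (hD : 1 ≤ D) (hp : 2 ≤ p)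
    (hm2 : 1 ≤ m2) (hm4 : 1 ≤ m4)
    (H2 : D*m2^2 = b*p + 2) (H4 : D*m4^2 = b*p^3 + 2) : False := by
  have hV1 : 1 ≤ D*m2*m4 := by
    have h0 : 0 < D*m2*m4 := mul_pos (mul_pos (by omega) (by omega)) (by omega)
    linarith
  have key : (D*m2*m4)^2 = (b*p + 2)*(b*p^3 + 2) := by
    have h0 : (D*m2*m4)^2 = (D*m2^2)*(D*m4^2) := by ring
    rw [H2, H4] at h0; exact h0
  have hbp : 2 ≤ b*p := by nlinarith
  have hW1 : p ≤ b*p^2 + p := by nlinarith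
  have hWR : (b*p^2 + p)^2 - (D*m2*m4)^2 = p^2 - 2*b*p - 4 := by linear_combination -key
  rcases lt_trichotomy (D*m2*m4) (b*p^2 + p) with hVW | hVW | hVW
  · have hd1 : 1 ≤ (b*p^2+p) - D*m2*m4 := by linarith
    have hfac : ((b*p^2+p) - D*m2*m4)*((b*p^2+p) + D*m2*m4) = p^2-2*b*p-4 := by
      linear_combination hWR
    have hineq : 1*((b*p^2+p) + D*m2*m4) ≤ p^2-2*b*p-4 := by
      calc 1*((b*p^2+p) + D*m2*m4)
          ≤ ((b*p^2+p) - D*m2*m4)*((b*p^2+p) + D*m2*m4) :=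
            mul_le_mul_of_nonneg_right hd1 (by linarith)
        _ = p^2-2*b*p-4 := hfac
    nlinarith [hineq,
      mul_nonneg (sub_nonneg.mpr hb) (mul_nonneg (show (0:ℤ) ≤ p by omega) (show (0:ℤ) ≤ p-1 by omega))]
  · have hR0 : p^2 - 2*b*p - 4 = 0 := by rw [← hWR, hVW]; ring
    have hdvd : p ∣ 4 := ⟨p - 2*b, by linear_combination -hR0⟩
    have hp4 := Int.le_of_dvd (by norm_num) hdvd
    interval_cases p <;> omega
  · have hd1 : 1 ≤ D*m2*m4 - (b*p^2+p) := by linarith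
    have hfac : (D*m2*m4 - (b*p^2+p))*(D*m2*m4 + (b*p^2+p)) = -(p^2-2*b*p-4) := by
      linear_combination -hWR
    have hineq : 1*(D*m2*m4 + (b*p^2+p)) ≤ -(p^2-2*b*p-4) := by
      calc 1*(D*m2*m4 + (b*p^2+p))
          ≤ (D*m2*m4 - (b*p^2+p))*(D*m2*m4 + (b*p^2+p)) :=
            mul_le_mul_of_nonneg_right hd1 (by linarith)
        _ = -(p^2-2*b*p-4) := hfac
    nlinarith [hineq,
      mul_nonneg (sub_nonneg.mpr hb) (mul_nonneg (show (0:ℤ) ≤ p by omega) (show (0:ℤ) ≤ p-1 by omega))]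


private lemma pair24 (b D p q m2 m4 d2 d4 : ℤ) (hb : 1 ≤ b) (hD : 1 ≤ D)
    (hq : 1 ≤ q) (hqp : q < p) (hgcd : Int.gcd p q = 1)
    (hd2 : d2 = 2 ∨ d2 = -2) (hd4 : d4 = 2 ∨ d4 = -2)
    (hm2 : 1 ≤ m2) (hm4 : 1 ≤ m4)
    (H2 : D*m2^2 = b*q^2*p - d2) (H4 : D*m4^2 = b*p^3 - d4) :
    q = 1 ∧ ((p = 3 ∧ b = 1 ∧ d2 = 2 ∧ d4 = 2) ∨ (p = 2 ∧ b = 2 ∧ d2 = 2 ∧ d4 = -2)) := by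
  rcases (by omega : q = 1 ∨ 2 ≤ q) with hq1 | hq2
  · subst hq1
    refine ⟨rfl, ?_⟩
    have hp2 : 2 ≤ p := by omega
    rcases hd2 with rfl | rfl <;> rcases hd4 with rfl | rfl
    · obtain ⟨hp, hb'⟩ := partII_A b D p m2 m4 hb hD hp2 hm2 hm4
        (by linear_combination H2) (by linear_combination H4)
      exact Or.inl ⟨hp, hb', rfl, rfl⟩
    · obtain ⟨hp, hb'⟩ := partII_C b D p m2 m4 hb hD hp2 hm2 hm4
        (by linear_combination H2) (by linear_combination H4)
      exact Or.inr ⟨hp, hb', rfl, rfl⟩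
    · exact (partII_D b D p m2 m4 hb hD hp2 hm2 hm4
        (by linear_combination H2) (by linear_combination H4)).elim
    · exact (partII_B b D p m2 m4 hb hD hp2 hm2 hm4
        (by linear_combination H2) (by linear_combination H4)).elim
  · exfalso
    have hqndvd : ¬ q ∣ p := by
      intro hdvd
      have h1 : q ∣ (Int.gcd p q : ℤ) := Int.dvd_coe_gcd hdvd dvd_rfl
      rw [hgcd] at h1
      have := Int.le_of_dvd (by norm_num) h1
      omega
    exact partI b D p q m2 m4 d2 d4 hb hD hq2 hqp hqndvd hd2 hd4 hm2 hm4 H2 H4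

private lemma low_bd (Dz m d n : ℤ) (hD : 1 ≤ Dz) (hm : 1 ≤ m)
    (hd : d = 2 ∨ d = -2) (hf : n = Dz*m^2 + d) : -1 ≤ n := by
  have h1 : 1 ≤ Dz*m^2 := by nlinarith
  omega

private lemma neg_left (x y : ℤ) (hy : 0 ≤ y) (h : x*y < 0) : x < 0 := by
  by_contra hc
  push_neg at hc
  exact absurd h (not_lt.mpr (mul_nonneg hc hy))

private lemma b_pos (c b n : ℤ) (hc : 0 < c) (hn : 0 < n) (he : n = c * b) : 1 ≤ b := by
  by_contra h
  push_neg at h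
  nlinarith

private lemma D_one (Dz m : ℤ) (hD : 1 ≤ Dz) (hm : 1 ≤ m) (h : Dz*m^2 = 1) : Dz = 1 := by
  nlinarith

private lemma D_two (Dz m : ℤ) (hD : 1 ≤ Dz) (hm : 1 ≤ m) (h : Dz*m^2 = 2) :
    Dz = 2 ∧ m = 1 := by
  have hm1 : m = 1 := by nlinarith
  subst hm1
  constructor
  · linarith
  · rfl

private lemma no_sq_7 (m : ℤ) (h : m^2 = 7) : False := by
  rcases le_or_gt m 2 with h' | h'
  · rcases le_or_gt (-2) m with h'' | h'' <;> nlinarith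
  · nlinarith

private lemma no_sq_11 (m : ℤ) (h : m^2 = 11) : False := by
  rcases le_or_gt m 3 with h' | h'
  · rcases le_or_gt (-3) m with h'' | h'' <;> nlinarith
  · nlinarith

private lemma no_sq_2 (m : ℤ) (h : m^2 = 2) : False := by
  rcases le_or_gt m 1 with h' | h'
  · rcases le_or_gt (-1) m with h'' | h'' <;> nlinarith
  · nlinarith

private lemma kill9 (Dz m3 d3 : ℤ) (hD : Dz = 1) (hm : 1 ≤ m3)
    (hd : d3 = 2 ∨ d3 = -2) (hf : (9:ℤ) = Dz*m3^2 + d3) : False := by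
  subst hD
  rcases hd with rfl | rfl
  · exact no_sq_7 m3 (by linarith)
  · exact no_sq_11 m3 (by linarith)

private lemma kill2 (Dz m1 d1 : ℤ) (hD : Dz = 2) (hm : 1 ≤ m1)
    (hd : d1 = 2 ∨ d1 = -2) (hf : (2:ℤ) = Dz*m1^2 + d1) : False := by
  subst hD
  rcases hd with rfl | rfl
  · nlinarith
  · exact no_sq_2 m1 (by linarith)

/-- No geometric progression contains four distinct integers of the form
`D m² ± 2` with `m` a positive integer (`D` a fixed positive integer). -/
theorem no_four_in_geometric_progression (D : ℕ) (hD : 0 < D) :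
    ¬ ∃ (n₁ n₂ n₃ n₄ : ℤ) (r : ℚ), n₁ ≠ 0 ∧ r ≠ 0 ∧
      (n₂ : ℚ) = (n₁ : ℚ) * r ∧ (n₃ : ℚ) = (n₁ : ℚ) * r ^ 2 ∧
      (n₄ : ℚ) = (n₁ : ℚ) * r ^ 3 ∧
      n₁ ≠ n₂ ∧ n₁ ≠ n₃ ∧ n₁ ≠ n₄ ∧ n₂ ≠ n₃ ∧ n₂ ≠ n₄ ∧ n₃ ≠ n₄ ∧
      (∀ n ∈ ({n₁, n₂, n₃, n₄} : Set ℤ),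
        ∃ (m : ℕ) (δ : ℤ), 0 < m ∧ (δ = 2 ∨ δ = -2) ∧
          n = (D : ℤ) * (m : ℤ) ^ 2 + δ) := by
  rintro ⟨n₁, n₂, n₃, n₄, r, hn₁, hr, e2, e3, e4, h12, h13, h14, h23, h24, h34, hform⟩
  obtain ⟨a₁, d₁, ha₁, hd₁, hf₁⟩ := hform n₁ (by simp)
  obtain ⟨a₂, d₂, ha₂, hd₂, hf₂⟩ := hform n₂ (by simp)
  obtain ⟨a₃, d₃, ha₃, hd₃, hf₃⟩ := hform n₃ (by simp)
  obtain ⟨a₄, d₄, ha₄, hd₄, hf₄⟩ := hform n₄ (by simp)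
  clear hform
  -- extract integer GP data and discard the rational
  obtain ⟨p, q, hq1, hp0, hgcd, E2, E3, E4, hn₂0, hn₃0, hn₄0⟩ :
      ∃ p q : ℤ, 1 ≤ q ∧ p ≠ 0 ∧ Int.gcd p q = 1 ∧
        n₂ * q = n₁ * p ∧ n₃ * q^2 = n₁ * p^2 ∧ n₄ * q^3 = n₁ * p^3 ∧
        n₂ ≠ 0 ∧ n₃ ≠ 0 ∧ n₄ ≠ 0 := by
    refine ⟨r.num, (r.den : ℤ), by exact_mod_cast r.pos, Rat.num_ne_zero.mpr hr, ?_, ?_, ?_, ?_, ?_, ?_, ?_⟩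
    · simpa [Int.gcd] using r.reduced
    · have h : ((n₂:ℚ)) * ((r.den:ℕ):ℚ) = (n₁:ℚ) * ((r.num:ℤ):ℚ) := by
        rw [e2, mul_assoc, Rat.mul_den_eq_num]
      exact_mod_cast h
    · have h : ((n₃:ℚ)) * ((r.den:ℕ):ℚ)^2 = (n₁:ℚ) * ((r.num:ℤ):ℚ)^2 := by
        rw [e3]
        linear_combination ((n₁:ℚ)*(r*((r.den:ℕ):ℚ) + ((r.num:ℤ):ℚ))) * (Rat.mul_den_eq_num r)
      exact_mod_cast h
    · have h : ((n₄:ℚ)) * ((r.den:ℕ):ℚ)^3 = (n₁:ℚ) * ((r.num:ℤ):ℚ)^3 := by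
        rw [e4]
        linear_combination
          ((n₁:ℚ)*((r*((r.den:ℕ):ℚ))^2 + (r*((r.den:ℕ):ℚ))*((r.num:ℤ):ℚ) + ((r.num:ℤ):ℚ)^2)) *
            (Rat.mul_den_eq_num r)
      exact_mod_cast h
    · intro h0
      rw [h0] at e2
      exact (mul_ne_zero (show (n₁:ℚ) ≠ 0 from Int.cast_ne_zero.mpr hn₁) hr)
        (by exact_mod_cast e2.symm)
    · intro h0
      rw [h0] at e3
      exact (mul_ne_zero (show (n₁:ℚ) ≠ 0 from Int.cast_ne_zero.mpr hn₁) (pow_ne_zero 2 hr))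
        (by exact_mod_cast e3.symm)
    · intro h0
      rw [h0] at e4
      exact (mul_ne_zero (show (n₁:ℚ) ≠ 0 from Int.cast_ne_zero.mpr hn₁) (pow_ne_zero 3 hr))
        (by exact_mod_cast e4.symm)
  clear e2 e3 e4 hr
  have hDz : 1 ≤ (D:ℤ) := by exact_mod_cast hD
  have hm₁ : 1 ≤ (a₁:ℤ) := by exact_mod_cast ha₁
  have hm₂ : 1 ≤ (a₂:ℤ) := by exact_mod_cast ha₂
  have hm₃ : 1 ≤ (a₃:ℤ) := by exact_mod_cast ha₃
  have hm₄ : 1 ≤ (a₄:ℤ) := by exact_mod_cast ha₄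
  have hlow₁ := low_bd (D:ℤ) (a₁:ℤ) d₁ n₁ hDz hm₁ hd₁ hf₁
  have hlow₂ := low_bd (D:ℤ) (a₂:ℤ) d₂ n₂ hDz hm₂ hd₂ hf₂
  have hlow₃ := low_bd (D:ℤ) (a₃:ℤ) d₃ n₃ hDz hm₃ hd₃ hf₃
  have hlow₄ := low_bd (D:ℤ) (a₄:ℤ) d₄ n₄ hDz hm₄ hd₄ hf₄
  -- p > 0
  have hppos : 0 < p := by
    rcases lt_or_gt_of_ne hp0 with hneg | hpos
    · exfalso
      rcases lt_or_gt_of_ne hn₁ with h1n | h1n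
      · have h31 : n₃ * q^2 < 0 := by
          rw [E3]
          exact mul_neg_of_neg_of_pos h1n (by positivity)
        have hn₃neg : n₃ < 0 := neg_left n₃ (q^2) (by positivity) h31
        exact h13 (by omega)
      · have h21 : n₂ * q < 0 := by
          rw [E2]
          exact mul_neg_of_pos_of_neg h1n hneg
        have hn₂neg : n₂ < 0 := neg_left n₂ q (by omega) h21
        have h41 : n₄ * q^3 < 0 := by
          rw [E4]
          exact mul_neg_of_pos_of_neg h1n (by nlinarith)
        have hn₄neg : n₄ < 0 := neg_left n₄ (q^3) (by positivity) h41
        exact h24 (by omega)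
    · exact hpos
  -- n₁ > 0
  have hn₁pos : 0 < n₁ := by
    rcases lt_or_gt_of_ne hn₁ with h1n | h1n
    · exfalso
      have h21 : n₂ * q < 0 := by
        rw [E2]
        exact mul_neg_of_neg_of_pos h1n hppos
      have hn₂neg : n₂ < 0 := neg_left n₂ q (by omega) h21
      exact h12 (by omega)
    · exact h1n
  have hcop : IsCoprime p q := Int.isCoprime_iff_gcd_eq_one.mpr hgcd
  obtain ⟨b, hb⟩ : q^3 ∣ n₁ := by
    have hcop3 : IsCoprime (q^3) (p^3) := (hcop.symm).pow
    exact hcop3.dvd_of_dvd_mul_right ⟨n₄, by linarith [E4]⟩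
  have hbpos : 1 ≤ b := b_pos (q^3) b n₁ (by positivity) hn₁pos hb
  have hq0 : q ≠ 0 := by omega
  have hn₂e : n₂ = b*q^2*p := by
    have h0 : n₂ * q = (b*q^2*p) * q := by linear_combination E2 + p * hb
    exact mul_right_cancel₀ hq0 h0
  have hn₃e : n₃ = b*q*p^2 := by
    have h0 : n₃ * q^2 = (b*q*p^2) * q^2 := by linear_combination E3 + p^2 * hb
    exact mul_right_cancel₀ (pow_ne_zero 2 hq0) h0
  have hn₄e : n₄ = b*p^3 := by
    have h0 : n₄ * q^3 = (b*p^3) * q^3 := by linear_combination E4 + p^3 * hb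
    exact mul_right_cancel₀ (pow_ne_zero 3 hq0) h0
  have hpq : p ≠ q := by
    intro he
    exact h12 (by rw [hb, hn₂e, he]; ring)
  clear E2 E3 E4 hlow₁ hlow₂ hlow₃ hlow₄ h13 h14 h23 h24 h34 hn₂0 hn₃0 hn₄0 hcop
  rcases lt_or_gt_of_ne hpq with hlt | hgt
  · -- p < q
    have hgcd' : Int.gcd q p = 1 := by rwa [Int.gcd_comm]
    obtain ⟨hpe1, hcases⟩ := pair24 b (D:ℤ) q p (a₃:ℤ) (a₁:ℤ) d₃ d₁ hbpos hDz
      (by omega) hlt hgcd' hd₃ hd₁ hm₃ hm₁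
      (by linear_combination hn₃e - hf₃) (by linear_combination hb - hf₁)
    rcases hcases with ⟨hq3, hb1, hd₃e, hd₁e⟩ | ⟨hq2, hb2, hd₃e, hd₁e⟩
    · have hDm : (D:ℤ) * (a₃:ℤ)^2 = 1 := by
        have h0 := hf₃
        rw [hn₃e, hq3, hpe1, hb1, hd₃e] at h0
        linarith
      have hD1 := D_one (D:ℤ) (a₃:ℤ) hDz hm₃ hDm
      have hn₂9 : n₂ = 9 := by rw [hn₂e, hq3, hpe1, hb1]; ring
      exact kill9 (D:ℤ) (a₂:ℤ) d₂ hD1 hm₂ hd₂ (by rw [← hn₂9]; exact hf₂)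
    · have hDm : (D:ℤ) * (a₃:ℤ)^2 = 2 := by
        have h0 := hf₃
        rw [hn₃e, hq2, hpe1, hb2, hd₃e] at h0
        linarith
      obtain ⟨hD2, -⟩ := D_two (D:ℤ) (a₃:ℤ) hDz hm₃ hDm
      have hn₄2 : n₄ = 2 := by rw [hn₄e, hpe1, hb2]; ring
      exact kill2 (D:ℤ) (a₄:ℤ) d₄ hD2 hm₄ hd₄ (by rw [← hn₄2]; exact hf₄)
  · -- q < p
    obtain ⟨hqe1, hcases⟩ := pair24 b (D:ℤ) p q (a₂:ℤ) (a₄:ℤ) d₂ d₄ hbpos hDz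
      hq1 hgt hgcd hd₂ hd₄ hm₂ hm₄
      (by linear_combination hn₂e - hf₂) (by linear_combination hn₄e - hf₄)
    rcases hcases with ⟨hp3, hb1, hd₂e, hd₄e⟩ | ⟨hp2, hb2, hd₂e, hd₄e⟩
    · have hDm : (D:ℤ) * (a₂:ℤ)^2 = 1 := by
        have h0 := hf₂
        rw [hn₂e, hp3, hqe1, hb1, hd₂e] at h0
        linarith
      have hD1 := D_one (D:ℤ) (a₂:ℤ) hDz hm₂ hDm
      have hn₃9 : n₃ = 9 := by rw [hn₃e, hp3, hqe1, hb1]; ring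
      exact kill9 (D:ℤ) (a₃:ℤ) d₃ hD1 hm₃ hd₃ (by rw [← hn₃9]; exact hf₃)
    · have hDm : (D:ℤ) * (a₂:ℤ)^2 = 2 := by
        have h0 := hf₂
        rw [hn₂e, hp2, hqe1, hb2, hd₂e] at h0
        linarith
      obtain ⟨hD2, -⟩ := D_two (D:ℤ) (a₂:ℤ) hDz hm₂ hDm
      have hn₁2 : n₁ = 2 := by rw [hb, hqe1, hb2]; ring
      exact kill2 (D:ℤ) (a₁:ℤ) d₁ hD2 hm₁ hd₁ (by rw [← hn₁2]; exact hf₁)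
end

section
/- Let p be an odd prime, let s, a, b be positive integers with a ≥ b, let k₁, …, k_s be odd integers each greater than 1, let t₁, …, t_s be positive integers and r₁, …, r_s nonnegative integers with tᵢ > rᵢ for every i, and let δ ∈ {4, −4}. Then the equation x² = p^{2a} k₁^{2t₁} ⋯ k_s^{2t_s} y² − δ p^{a+b} k₁^{t₁+r₁} ⋯ k_s^{t_s+r_s} + 1 has no solutions in positive integers x, y with y odd. -/
/-- For an odd prime `p`, odd integers `k₁, …, k_s > 1`, exponents `tᵢ > rᵢ`,
`a ≥ b ≥ 1` and `δ = ±4`, the equation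
`x² = p^{2a} ∏ kᵢ^{2tᵢ} · y² − δ p^{a+b} ∏ kᵢ^{tᵢ+rᵢ} + 1`
has no solutions in positive integers `x, y` with `y` odd. -/
theorem ma_type_no_solution (p : ℕ) (hp : p.Prime) (hpodd : Odd p)
    (s a b : ℕ) (hs : 0 < s) (ha : 0 < a) (hb : 0 < b) (hab : b ≤ a)
    (k : Fin s → ℤ) (hkodd : ∀ i, Odd (k i)) (hk1 : ∀ i, 1 < k i)
    (t : Fin s → ℕ) (r : Fin s → ℕ) (ht : ∀ i, 0 < t i) (htr : ∀ i, r i < t i)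
    (δ : ℤ) (hδ : δ = 4 ∨ δ = -4) :
    ¬ ∃ x y : ℤ, 0 < x ∧ 0 < y ∧ Odd y ∧
      x ^ 2 = (p : ℤ) ^ (2 * a) * (∏ i, (k i) ^ (2 * t i)) * y ^ 2
        - δ * (p : ℤ) ^ (a + b) * (∏ i, (k i) ^ (t i + r i)) + 1 := by
  rintro ⟨x, y, hx, hy, hyodd, heq⟩
  set A : ℤ := (p : ℤ) ^ a * ∏ i, k i ^ t i with hAdef
  have hAodd : Odd A := by
    refine Odd.mul ?_ ?_
    · exact ((Int.odd_coe_nat p).mpr hpodd).pow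
    · exact Finset.prod_induction _ Odd (fun _ _ => Odd.mul) odd_one
        (fun i _ => (hkodd i).pow)
  have hrw : (p : ℤ) ^ (2 * a) * (∏ i, (k i) ^ (2 * t i)) = A ^ 2 := by
    rw [hAdef, mul_pow, ← Finset.prod_pow]
    congr 1
    · rw [← pow_mul, mul_comm]
    · exact Finset.prod_congr rfl fun i _ => by rw [← pow_mul, mul_comm]
  rw [hrw] at heq
  obtain ⟨m, hm⟩ := hAodd.mul hyodd
  -- pass to ZMod 4
  have h4 : ((x : ZMod 4)) ^ 2 = 2 := by
    have hcast := congrArg (fun z : ℤ => (z : ZMod 4)) heq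
    push_cast at hcast
    have hδ0 : ((δ : ℤ) : ZMod 4) = 0 := by
      rcases hδ with h | h <;> subst h <;> decide
    have hAy : (A : ZMod 4) ^ 2 * (y : ZMod 4) ^ 2 = 1 := by
      have h1 : ((A * y : ℤ) : ZMod 4) = 2 * (m : ZMod 4) + 1 := by
        rw [hm]; push_cast; ring
      have h2 : (A : ZMod 4) ^ 2 * (y : ZMod 4) ^ 2
          = ((A * y : ℤ) : ZMod 4) ^ 2 := by push_cast; ring
      rw [h2, h1]
      have h3 : (2 * (m : ZMod 4) + 1) ^ 2 = 4 * ((m : ZMod 4) ^ 2 + m) + 1 := by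
        ring
      rw [h3]
      have h4' : (4 : ZMod 4) = 0 := by decide
      rw [h4', zero_mul, zero_add]
    rw [hcast, hδ0, hAy]
    ring
  have : ∀ u : ZMod 4, u ^ 2 ≠ 2 := by decide
  exact this _ h4
end

section
/- Let a, x, n, l be positive integers with x > 1 and a xⁿ ≠ 1, and let y be a rational number. Then (a x^{n+2l} − 1)/(a xⁿ − 1) = y² holds if and only if l is even, a = (3^{l−1} + 1)/4, x = 3, n = 1, and y = ±(3^{l} + 2). -/
set_option maxHeartbeats 2000000

namespace FLSU


/-- the pair (A_j, B_j) with γ^{2j+1} = A_j √(k+1) + B_j √k, γ = √(k+1)+√k. -/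
def AB (k : ℤ) : ℕ → ℤ × ℤ
  | 0 => (1, 1)
  | j+1 => ((2*k+1) * (AB k j).1 + 2*k*(AB k j).2,
            2*(k+1)*(AB k j).1 + (2*k+1)*(AB k j).2)

def A (k : ℤ) (j : ℕ) : ℤ := (AB k j).1
def B (k : ℤ) (j : ℕ) : ℤ := (AB k j).2

@[simp] lemma A_zero (k : ℤ) : A k 0 = 1 := rfl
@[simp] lemma B_zero (k : ℤ) : B k 0 = 1 := rfl
lemma A_succ (k : ℤ) (j : ℕ) : A k (j+1) = (2*k+1) * A k j + 2*k * B k j := rfl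
lemma B_succ (k : ℤ) (j : ℕ) : B k (j+1) = 2*(k+1) * A k j + (2*k+1) * B k j := rfl

lemma norm_AB (k : ℤ) (j : ℕ) : (k+1) * A k j ^ 2 - k * B k j ^ 2 = 1 := by
  induction j with
  | zero => simp
  | succ j ih => rw [A_succ, B_succ]; linear_combination ih

lemma A_pos_le_B (k : ℤ) (hk : 0 ≤ k) (j : ℕ) : 1 ≤ A k j ∧ A k j ≤ B k j := by
  induction j with
  | zero => simp
  | succ j ih =>
    obtain ⟨h1, h2⟩ := ih
    constructor
    · rw [A_succ]; nlinarith
    · rw [A_succ, B_succ]; nlinarith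

lemma A_pos (k : ℤ) (hk : 0 ≤ k) (j : ℕ) : 1 ≤ A k j := (A_pos_le_B k hk j).1
lemma B_pos (k : ℤ) (hk : 0 ≤ k) (j : ℕ) : 1 ≤ B k j :=
  le_trans (A_pos k hk j) (A_pos_le_B k hk j).2

lemma A_succ_ge (k : ℤ) (hk : 0 ≤ k) (j : ℕ) : (4*k+1) * A k j ≤ A k (j+1) := by
  obtain ⟨h1, h2⟩ := A_pos_le_B k hk j
  rw [A_succ]; nlinarith

lemma A_ge_pow (k : ℤ) (hk : 0 ≤ k) (j : ℕ) : (4*k+1)^j ≤ A k j := by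
  induction j with
  | zero => simp
  | succ j ih =>
    have h1 := A_succ_ge k hk j
    have h2 : (4*k+1)^(j+1) ≤ (4*k+1) * A k j := by
      rw [pow_succ, mul_comm]
      exact mul_le_mul_of_nonneg_left ih (by linarith)
    linarith

lemma one_lt_A (k : ℤ) (hk : 1 ≤ k) {j : ℕ} (hj : 1 ≤ j) : 1 < A k j := by
  have h := A_ge_pow k (by linarith) j
  have : (4*k+1)^1 ≤ (4*k+1)^j := pow_le_pow_right₀ (by linarith) hj
  simp only [pow_one] at this
  linarith

/-- descent classification of all solutions of z² = k(k+1)t² - k -/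
lemma classify (k : ℤ) (hk : 1 ≤ k) :
    ∀ N : ℕ, ∀ t z : ℤ, t ≤ (N:ℤ) → 1 ≤ t → 0 ≤ z →
      z^2 = k*(k+1)*t^2 - k → ∃ j, t = A k j ∧ z = k * B k j := by
  intro N
  induction N with
  | zero => intro t z ht h1 _ _; exfalso; omega
  | succ N ih =>
    intro t z htN h1 hz heq
    rcases eq_or_lt_of_le h1 with h|h
    · refine ⟨0, by simp [← h], ?_⟩
      have hz2 : z^2 = k^2 := by rw [← h] at heq; ring_nf at heq ⊢; linarith
      have : z = k := by nlinarith
      simp [this]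
    · -- t ≥ 2
      have h2 : 2 ≤ t := h
      have h2z : 2*z < (2*k+1)*t := by
        by_contra hcon
        push_neg at hcon
        have h0 : (0:ℤ) ≤ (2*k+1)*t := by nlinarith
        have := pow_le_pow_left₀ h0 hcon 2
        nlinarith
      have hzlb : 2*k*t < 2*z := by
        by_contra hcon
        push_neg at hcon
        have := pow_le_pow_left₀ (by linarith : (0:ℤ) ≤ 2*z) hcon 2
        nlinarith
      have ht'1 : 1 ≤ (2*k+1)*t - 2*z := by linarith
      have ht't : (2*k+1)*t - 2*z < t := by linarith
      have hinv : |(2*k+1)*z - 2*(k*(k+1))*t|^2 = k*(k+1)*((2*k+1)*t - 2*z)^2 - k := by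
        rw [sq_abs]; linear_combination heq
      obtain ⟨j, hA, hB⟩ := ih ((2*k+1)*t - 2*z) |(2*k+1)*z - 2*(k*(k+1))*t|
        (by omega) ht'1 (abs_nonneg _) hinv
      rcases abs_choice ((2*k+1)*z - 2*(k*(k+1))*t) with hc|hc <;> rw [hc] at hB
      · -- z' = k B j
        refine ⟨j+1, ?_, ?_⟩
        · rw [A_succ, ← hA]; linear_combination 2*hB
        · rw [B_succ]; linear_combination (2*k*(k+1))*hA + (2*k+1)*hB
      · -- z' = -(k B j): contradiction
        exfalso
        have hAB := (A_pos_le_B k (by linarith) j).2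
        have hAj : A k j ≤ (2*k+1)*t - 2*z := le_of_eq hA.symm
        -- t = (2k+1)*A j - 2k*B j ≤ A j
        have ht : t = (2*k+1)*A k j + 2*((2*k+1)*z - 2*(k*(k+1))*t) := by
          rw [← hA]; ring
        have hBj : k * B k j = -((2*k+1)*z - 2*(k*(k+1))*t) := by linarith [hB]
        have : t ≤ A k j := by nlinarith
        linarith

/-- γ^{2s} = P_s + Q_s √(k(k+1)) -/
def E (k : ℤ) : ℕ → ℤ × ℤ
  | 0 => (1, 0)
  | s+1 => ((2*k+1)*(E k s).1 + 2*k*(k+1)*(E k s).2,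
            2*(E k s).1 + (2*k+1)*(E k s).2)

def P (k : ℤ) (s : ℕ) : ℤ := (E k s).1
def Q (k : ℤ) (s : ℕ) : ℤ := (E k s).2

@[simp] lemma P_zero (k : ℤ) : P k 0 = 1 := rfl
@[simp] lemma Q_zero (k : ℤ) : Q k 0 = 0 := rfl
lemma P_succ (k : ℤ) (s : ℕ) : P k (s+1) = (2*k+1) * P k s + 2*k*(k+1) * Q k s := rfl
lemma Q_succ (k : ℤ) (s : ℕ) : Q k (s+1) = 2 * P k s + (2*k+1) * Q k s := rfl

lemma add_law (k : ℤ) (j : ℕ) : ∀ s : ℕ,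
    A k (j + s) = A k j * P k s + k * B k j * Q k s ∧
    B k (j + s) = B k j * P k s + (k+1) * A k j * Q k s := by
  intro s
  induction s with
  | zero => simp
  | succ s ih =>
    obtain ⟨h1, h2⟩ := ih
    constructor
    · rw [show j + (s+1) = (j+s)+1 by ring, A_succ, P_succ, Q_succ]
      linear_combination (2*k+1) * h1 + 2*k * h2
    · rw [show j + (s+1) = (j+s)+1 by ring, B_succ, P_succ, Q_succ]
      linear_combination 2*(k+1) * h1 + (2*k+1) * h2

lemma mul_law (k : ℤ) (s₁ : ℕ) : ∀ s₂ : ℕ,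
    P k (s₁ + s₂) = P k s₁ * P k s₂ + k*(k+1) * Q k s₁ * Q k s₂ ∧
    Q k (s₁ + s₂) = P k s₁ * Q k s₂ + Q k s₁ * P k s₂ := by
  intro s₂
  induction s₂ with
  | zero => simp
  | succ s ih =>
    obtain ⟨h1, h2⟩ := ih
    constructor
    · rw [show s₁ + (s+1) = (s₁+s)+1 by ring, P_succ, P_succ, Q_succ]
      linear_combination (2*k+1) * h1 + 2*k*(k+1) * h2
    · rw [show s₁ + (s+1) = (s₁+s)+1 by ring, Q_succ, P_succ, Q_succ]
      linear_combination 2 * h1 + (2*k+1) * h2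

lemma sq_law (k : ℤ) (j : ℕ) :
    P k (2*j+1) = (k+1) * A k j ^ 2 + k * B k j ^ 2 ∧
    Q k (2*j+1) = 2 * A k j * B k j := by
  induction j with
  | zero => constructor <;> simp [P, Q, E] <;> ring
  | succ j ih =>
    obtain ⟨h1, h2⟩ := ih
    have e := mul_law k (2*j+1) 2
    rw [show 2*j+1+2 = 2*(j+1)+1 by ring] at e
    obtain ⟨e1, e2⟩ := e
    have hP2 : P k 2 = 8*k^2+8*k+1 := by simp [P, E]; ring
    have hQ2 : Q k 2 = 8*k+4 := by simp [Q, E]; ring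
    rw [hP2, hQ2] at e1 e2
    constructor
    · rw [e1, h1, h2, A_succ, B_succ]; ring
    · rw [e2, h1, h2, A_succ, B_succ]; ring

lemma pow_inner (k : ℤ) (j' : ℕ) : ∀ r : ℕ, ∃ u q w : ℤ,
    P k ((2*j'+1)*r) = (k * B k j' ^ 2)^r + A k j' ^ 2 * u ∧
    Q k ((2*j'+1)*r) = A k j' * q ∧
    k * B k j' * q = 2*(r:ℤ) * (k * B k j' ^ 2)^r + A k j' ^ 2 * w := by
  intro r
  induction r with
  | zero => exact ⟨0, 0, 0, by simp, by simp, by simp⟩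
  | succ r ih =>
    obtain ⟨u, q, w, hP, hQ, hq⟩ := ih
    have e := mul_law k ((2*j'+1)*r) (2*j'+1)
    rw [show (2*j'+1)*r + (2*j'+1) = (2*j'+1)*(r+1) by ring] at e
    obtain ⟨e1, e2⟩ := e
    obtain ⟨s1, s2⟩ := sq_law k j'
    rw [s1, s2] at e1 e2
    refine ⟨(k * B k j'^2)^r * (k+1) + u * ((k+1) * A k j'^2 + k * B k j'^2)
        + 2*k*(k+1) * B k j' * q,
      2 * P k ((2*j'+1)*r) * B k j' + q * ((k+1) * A k j'^2 + k * B k j'^2),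
      2*(r:ℤ)*(k+1) * (k * B k j'^2)^r + 2*k * B k j'^2 * u
        + w * ((k+1) * A k j'^2 + k * B k j'^2), ?_, ?_, ?_⟩
    · rw [e1, hP, hQ]; push_cast; ring
    · rw [e2, hQ]; ring
    · push_cast
      calc k * B k j' * (2 * P k ((2*j'+1)*r) * B k j' + q * ((k+1) * A k j'^2 + k * B k j'^2))
          = 2*k*B k j'^2 * P k ((2*j'+1)*r) + (k * B k j' * q) * ((k+1) * A k j'^2 + k * B k j'^2) := by ring
        _ = _ := by rw [hP, hq]; push_cast; ring

lemma pow_mod (k : ℤ) (j' r : ℕ) : ∃ c : ℤ,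
    A k (j' + (2*j'+1)*r) = (2*(r:ℤ)+1) * A k j' * (k * B k j' ^ 2)^r + A k j' ^ 3 * c := by
  obtain ⟨u, q, w, hP, hQ, hq⟩ := pow_inner k j' r
  obtain ⟨h1, _⟩ := add_law k j' ((2*j'+1)*r)
  refine ⟨u + w, ?_⟩
  rw [h1, hP, hQ]
  calc A k j' * ((k * B k j'^2)^r + A k j'^2 * u) + k * B k j' * (A k j' * q)
      = A k j' * ((k * B k j'^2)^r + A k j'^2 * u) + A k j' * (k * B k j' * q) := by ring
    _ = _ := by rw [hq]; ring

lemma A_dvd_A (k : ℤ) (j' r : ℕ) : A k j' ∣ A k (j' + (2*j'+1)*r) := by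
  obtain ⟨c, hc⟩ := pow_mod k j' r
  exact ⟨(2*(r:ℤ)+1) * (k * B k j' ^ 2)^r + A k j' ^ 2 * c, by rw [hc]; ring⟩

lemma triple_law (k : ℤ) (j' : ℕ) :
    A k (j' + (2*j'+1)) = A k j' * (4*(k+1) * A k j' ^ 2 - 3) := by
  obtain ⟨h1, _⟩ := add_law k j' (2*j'+1)
  obtain ⟨s1, s2⟩ := sq_law k j'
  rw [h1, s1, s2]
  linear_combination (-3 * A k j') * (norm_AB k j')

/-- sum of squares -/
def S : ℕ → ℤ
  | 0 => 0
  | j+1 => S j + ((j:ℤ)+1)^2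

lemma S_id (j : ℕ) : 6 * S j = (j:ℤ) * ((j:ℤ)+1) * (2*(j:ℤ)+1) := by
  induction j with
  | zero => simp [S]
  | succ j ih => rw [S]; push_cast; linear_combination ih

lemma congr2 (k : ℤ) (j : ℕ) : ∃ u v : ℤ,
    A k j = (-1)^j * ((2*(j:ℤ)+1) - 4 * S j * (k+1)) + (k+1)^2 * u ∧
    B k j = (-1)^j * (1 - 2*(j:ℤ)*((j:ℤ)+1)*(k+1)) + (k+1)^2 * v := by
  induction j with
  | zero => exact ⟨0, 0, by simp [S], by simp⟩
  | succ j ih =>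
    obtain ⟨u, v, hA, hB⟩ := ih
    refine ⟨(2*k+1)*u + 2*k*v - (-1)^j*(8 * S j + 4*(j:ℤ)*((j:ℤ)+1)),
            2*(k+1)*u + (2*k+1)*v - (-1)^j*(8 * S j + 4*(j:ℤ)*((j:ℤ)+1)), ?_, ?_⟩
    · rw [A_succ, S]; push_cast
      linear_combination (2*k+1) * hA + 2*k * hB
    · rw [B_succ]; push_cast
      linear_combination 2*(k+1) * hA + (2*k+1) * hB

lemma congr1 (k : ℤ) (j : ℕ) : (k+1) ∣ A k j - (-1)^j * (2*(j:ℤ)+1) := by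
  obtain ⟨u, v, hA, _⟩ := congr2 k j
  exact ⟨(k+1)*u - 4*(-1)^j * S j, by rw [hA]; ring⟩


lemma A_one (k : ℤ) : A k 1 = 4*k+1 := by
  calc A k 1 = (2*k+1) * A k 0 + 2*k * B k 0 := A_succ k 0
  _ = 4*k+1 := by rw [A_zero, B_zero]; ring

lemma B_one (k : ℤ) : B k 1 = 4*k+3 := by
  calc B k 1 = 2*(k+1) * A k 0 + (2*k+1) * B k 0 := B_succ k 0
  _ = 4*k+3 := by rw [A_zero, B_zero]; ring


lemma sign_transfer {d m : ℤ} (j : ℕ) (h : d ∣ (-1)^j * m) :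
    d ∣ m := by
  rcases neg_one_pow_eq_or ℤ j with he|he <;> rw [he] at h
  · simpa using h
  · rw [neg_one_mul] at h; exact dvd_neg.mp h

lemma exact_dvd (k : ℤ) (p : ℕ) (hp : p.Prime) (h2 : p ≠ 2)
    (hpK : (p:ℤ) ∣ (k+1)) (hH : (p:ℤ)^2 ∣ (k+1) ∨ p ≠ 3) :
    ∀ c j : ℕ, p^c ∣ 2*j+1 → ¬(p^(c+1) ∣ 2*j+1) →
      (p:ℤ)^c ∣ A k j ∧ ¬((p:ℤ)^(c+1) ∣ A k j) := by
  have hpInt : Prime (p:ℤ) := Nat.prime_iff_prime_int.mp hp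
  have hp0 : (p:ℤ) ≠ 0 := by exact_mod_cast hp.pos.ne'
  intro c
  induction c with
  | zero =>
    intro j _ hnd
    norm_num at hnd ⊢
    intro hdvd
    apply hnd
    obtain ⟨u, hu⟩ := congr1 k j
    have h1 : (p:ℤ) ∣ (-1)^j * (2*(j:ℤ)+1) := by
      have he : (-1:ℤ)^j * (2*(j:ℤ)+1) = A k j - (k+1)*u := by linear_combination -hu
      rw [he]
      exact dvd_sub hdvd (hpK.mul_right u)
    have h2' : (p:ℤ) ∣ (2*(j:ℤ)+1) := sign_transfer j h1
    have h3 : (p:ℤ) ∣ ((2*j+1 : ℕ) : ℤ) := by push_cast; exact h2'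
    exact_mod_cast h3
  | succ c ih =>
    rcases Nat.eq_zero_or_pos c with rfl|hcpos
    · -- exponent 1
      intro j hd hnd
      norm_num at hd hnd ⊢
      obtain ⟨u, v, hA, _⟩ := congr2 k j
      have hdZ : (p:ℤ) ∣ (2*(j:ℤ)+1) := by
        have h0 : ((p:ℕ):ℤ) ∣ ((2*j+1:ℕ):ℤ) := Int.natCast_dvd_natCast.mpr hd
        push_cast at h0; exact h0
      have hSK : (p:ℤ)^2 ∣ 4 * S j * (k+1) := by
        rcases hH with hK2|hne3
        · exact Dvd.dvd.mul_left hK2 _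
        · have h24 : (p:ℤ) ∣ 6 * (4 * S j) := by
            have he : (6:ℤ) * (4 * S j) = 4*(j:ℤ)*((j:ℤ)+1) * (2*(j:ℤ)+1) := by
              linear_combination 4 * S_id j
            rw [he]; exact hdZ.mul_left _
          have hp6 : ¬ (p:ℤ) ∣ 6 := by
            intro hd6
            have h6 : (p:ℕ) ∣ 6 := by exact_mod_cast hd6
            have hle := Nat.le_of_dvd (by norm_num) h6
            have h2le := hp.two_le
            interval_cases p
            · exact h2 rfl
            · exact hne3 rfl
            · exact absurd hp (by decide)
            · exact absurd h6 (by decide)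
            · exact absurd hp (by decide)
          have h4S : (p:ℤ) ∣ 4 * S j := ((hpInt.dvd_mul).mp h24).resolve_left hp6
          calc (p:ℤ)^2 = p * p := by ring
            _ ∣ (4 * S j) * (k+1) := mul_dvd_mul h4S hpK
            _ = 4 * S j * (k+1) := by ring
      have hpSK : (p:ℤ) ∣ 4 * S j * (k+1) := (dvd_pow_self (p:ℤ) two_ne_zero).trans hSK
      have hpK2 : (p:ℤ) ∣ (k+1)^2 := hpK.trans (dvd_pow_self _ two_ne_zero)
      have hK2 : (p:ℤ)^2 ∣ (k+1)^2 := pow_dvd_pow_of_dvd hpK 2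
      constructor
      · rw [hA]
        exact dvd_add ((dvd_sub hdZ hpSK).mul_left _) (hpK2.mul_right u)
      · intro hdvd
        have h1 : (p:ℤ)^2 ∣ (-1)^j * ((2*(j:ℤ)+1) - 4 * S j * (k+1)) := by
          have he : (-1:ℤ)^j * ((2*(j:ℤ)+1) - 4 * S j * (k+1)) = A k j - (k+1)^2*u := by
            linear_combination -hA
          rw [he]; exact dvd_sub hdvd (hK2.mul_right u)
        have h2' : (p:ℤ)^2 ∣ (2*(j:ℤ)+1) - 4 * S j * (k+1) := sign_transfer j h1
        have h3 : (p:ℤ)^2 ∣ (2*(j:ℤ)+1) := by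
          have := dvd_add h2' hSK
          simpa using this
        have h4 : (p:ℕ)^2 ∣ 2*j+1 := by
          have h5 : ((p:ℕ)^2 : ℤ) ∣ ((2*j+1:ℕ):ℤ) := by push_cast; exact h3
          exact_mod_cast h5
        exact hnd h4
    · -- exponent c+1, c ≥ 1
      intro j hd hnd
      have hpm : p ∣ 2*j+1 := dvd_trans (dvd_pow_self p (Nat.succ_ne_zero c)) hd
      obtain ⟨m'', hm''⟩ := hpm
      have hm''odd : m'' % 2 = 1 := by
        by_contra hcon
        have h2d : 2 ∣ m'' := by omega
        have : (2:ℕ) ∣ 2*j+1 := hm'' ▸ h2d.mul_left p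
        omega
      obtain ⟨r, hr⟩ := hp.odd_of_ne_two h2
      set j'' := m'' / 2 with hj''def
      have hm''eq : m'' = 2*j''+1 := by omega
      have hexp : (2*j''+1)*(2*r+1) = 2*(j'' + (2*j''+1)*r) + 1 := by ring
      have h1 : 2*j+1 = (2*j''+1)*(2*r+1) := by
        calc 2*j+1 = p * m'' := hm''
          _ = (2*r+1) * (2*j''+1) := by rw [hr, hm''eq]
          _ = (2*j''+1)*(2*r+1) := by ring
      have hjj : j = j'' + (2*j''+1)*r := by omega
      have hdm'' : p^c ∣ m'' := by
        have hd' : p * p^c ∣ p * m'' := by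
          rw [← pow_succ']; rw [hm''] at hd; exact hd
        exact (Nat.mul_dvd_mul_iff_left hp.pos).mp hd'
      have hndm'' : ¬ p^(c+1) ∣ m'' := by
        intro hcon
        apply hnd
        rw [hm'', pow_succ']
        exact Nat.mul_dvd_mul_left p hcon
      rw [hm''eq] at hdm'' hndm''
      obtain ⟨hdvdA, hndA⟩ := ih j'' hdm'' hndm''
      have hpA'' : (p:ℤ) ∣ A k j'' := dvd_trans (dvd_pow_self _ hcpos.ne') hdvdA
      have hnkB : ¬ (p:ℤ) ∣ k * B k j'' ^ 2 := by
        intro hcon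
        apply hpInt.not_dvd_one
        have hone : (1:ℤ) = (k+1) * A k j'' ^ 2 - k * B k j'' ^ 2 := (norm_AB k j'').symm
        rw [hone]
        exact dvd_sub ((dvd_pow hpA'' two_ne_zero).mul_left _) hcon
      obtain ⟨cc, hcc⟩ := pow_mod k j'' r
      rw [← hjj] at hcc
      have hrp : (2*(r:ℤ)+1) = (p:ℤ) := by rw [hr]; push_cast; ring
      rw [hrp] at hcc
      have hA3 : ((p:ℤ))^(c+1+1) ∣ A k j'' ^ 3 * cc := by
        have h3c : (p:ℤ)^(3*c) ∣ A k j'' ^ 3 := by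
          have := pow_dvd_pow_of_dvd hdvdA 3
          rwa [← pow_mul, mul_comm c 3] at this
        exact ((pow_dvd_pow (p:ℤ) (by omega : c+1+1 ≤ 3*c)).trans h3c).mul_right cc
      constructor
      · rw [hcc]
        apply dvd_add
        · rw [pow_succ']
          have := mul_dvd_mul_left (p:ℤ) (hdvdA.mul_right ((k * B k j'' ^ 2)^r))
          calc (p:ℤ) * (p:ℤ)^c ∣ (p:ℤ) * (A k j'' * (k * B k j'' ^ 2)^r) := this
            _ = (p:ℤ) * A k j'' * (k * B k j'' ^ 2)^r := by ring
        · exact (pow_dvd_pow (p:ℤ) (by omega : c+1 ≤ c+1+1)).trans hA3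
      · intro hcon
        rw [hcc] at hcon
        have hfirst : (p:ℤ)^(c+1+1) ∣ (p:ℤ) * (A k j'' * (k * B k j'' ^ 2)^r) := by
          have hds := dvd_sub hcon hA3
          calc (p:ℤ)^(c+1+1) ∣ (p:ℤ) * A k j'' * (k * B k j'' ^ 2)^r + A k j'' ^ 3 * cc - A k j'' ^ 3 * cc := hds
            _ = (p:ℤ) * (A k j'' * (k * B k j'' ^ 2)^r) := by ring
        have h2' : (p:ℤ)^(c+1) ∣ A k j'' * (k * B k j'' ^ 2)^r := by
          have heq2 : (p:ℤ)^(c+1+1) = (p:ℤ) * (p:ℤ)^(c+1) := by ring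
          rw [heq2] at hfirst
          exact (mul_dvd_mul_iff_left hp0).mp hfirst
        have hcop : IsCoprime ((p:ℤ)^(c+1)) ((k * B k j'' ^ 2)^r) :=
          IsCoprime.pow (hpInt.coprime_iff_not_dvd.mpr hnkB)
        exact hndA (hcop.dvd_of_dvd_mul_right h2')



lemma two_mul_lt (l : ℕ) (hl : 1 ≤ l) : 2*l+1 ≤ 3^l := by
  induction l with
  | zero => omega
  | succ l ih =>
    rcases Nat.eq_zero_or_pos l with rfl|hp
    · norm_num
    · have := ih hp
      have h3 : 3^(l+1) = 3 * 3^l := by ring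
      omega

lemma A_dvd_of_odd_factor (k : ℤ) (j j₀ d : ℕ) (hd : d % 2 = 1)
    (h : 2*j+1 = (2*j₀+1) * d) : A k j₀ ∣ A k j := by
  obtain ⟨r, hr⟩ : ∃ r, d = 2*r+1 := ⟨d/2, by omega⟩
  have hexp : (2*j₀+1)*(2*r+1) = 2*(j₀ + (2*j₀+1)*r) + 1 := by ring
  have hj : j = j₀ + (2*j₀+1)*r := by
    rw [hr] at h; omega
  rw [hj]
  exact A_dvd_A k j₀ r

lemma int_dvd_three_pow {z : ℤ} (l : ℕ) (hz : 1 ≤ z) (h : z ∣ (3:ℤ)^l) :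
    ∃ i : ℕ, i ≤ l ∧ z = 3^i := by
  have h1 : z.natAbs ∣ (3:ℕ)^l := by
    have h2 := Int.natAbs_dvd_natAbs.mpr h
    simpa [Int.natAbs_pow] using h2
  obtain ⟨i, hil, hi⟩ := (Nat.dvd_prime_pow (by norm_num)).mp h1
  refine ⟨i, hil, ?_⟩
  have h3 : z = z.natAbs := by omega
  rw [h3, hi]; push_cast; ring

lemma Gpos_helper (k : ℤ) (hk : 2 ≤ k) : 1 ≤ 4*(k+1)*(4*k+1)^2 - 3 := by nlinarith

lemma s0_helper (aa L : ℤ) (ha : 1 ≤ aa) (hL : 3 ≤ L) : (1:ℤ) ≠ 4*aa*L^2 - 1 := by nlinarith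

lemma l20_helper (aa L : ℤ) (ha : 1 ≤ aa) (hL : 3 ≤ L) : (1:ℤ) ≠ 3*(4*aa*L^2 - 1) := by nlinarith

theorem flsu_forward (a x n l : ℕ) (ha : 0 < a) (hx : 1 < x)
    (hn : 0 < n) (hl : 0 < l) (y : ℚ)
    (hEq : ((a : ℚ) * (x : ℚ) ^ (n + 2 * l) - 1) / ((a : ℚ) * (x : ℚ) ^ n - 1) = y ^ 2) :
    (2 ∣ l ∧ 4 * a = 3 ^ (l - 1) + 1 ∧ x = 3 ∧ n = 1 ∧
      (y = 3 ^ l + 2 ∨ y = -(3 ^ l + 2))) := by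
  have hx2 : (2:ℤ) ≤ (x:ℤ) := by exact_mod_cast hx
  have ha1 : (1:ℤ) ≤ (a:ℤ) := by exact_mod_cast ha
  have hxn : (x:ℤ) ≤ (x:ℤ)^n := by
    calc (x:ℤ) = (x:ℤ)^1 := (pow_one _).symm
    _ ≤ (x:ℤ)^n := pow_le_pow_right₀ (by linarith) hn
  set k : ℤ := (a:ℤ) * (x:ℤ)^n - 1 with hkdef
  have hK : k + 1 = (a:ℤ) * (x:ℤ)^n := by rw [hkdef]; ring
  have hxnpos : (0:ℤ) < (x:ℤ)^n := by positivity
  have hax : (x:ℤ)^n ≤ (a:ℤ)*(x:ℤ)^n := le_mul_of_one_le_left (by positivity) ha1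
  have hk1 : 1 ≤ k := by rw [hkdef]; linarith
  have hkQ : ((k:ℚ)) = (a:ℚ)*(x:ℚ)^n - 1 := by rw [hkdef]; push_cast; ring
  have hden : (a:ℚ)*(x:ℚ)^n - 1 ≠ 0 := by
    have h1 : (1:ℚ) ≤ (k:ℚ) := by exact_mod_cast hk1
    rw [← hkQ]; intro hc; rw [hc] at h1; norm_num at h1
  rw [div_eq_iff hden] at hEq
  set t : ℤ := (x:ℤ)^l with htdef
  have ht2 : 2 ≤ t := by
    calc (2:ℤ) ≤ (x:ℤ) := hx2
    _ = (x:ℤ)^1 := (pow_one _).symm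
    _ ≤ (x:ℤ)^l := pow_le_pow_right₀ (by linarith) hl
  have htQ : ((t:ℚ)) = (x:ℚ)^l := by rw [htdef]; push_cast; ring
  have hQ1 : ((k:ℚ)+1) * (t:ℚ)^2 - 1 = y^2 * (k:ℚ) := by
    rw [hkQ, htQ]
    have hxp : (x:ℚ)^(n+2*l) = (x:ℚ)^n * ((x:ℚ)^l)^2 := by
      rw [show n + 2*l = n + l*2 by ring, pow_add, pow_mul]
    rw [hxp] at hEq
    linear_combination hEq
  have hqq : (y*(k:ℚ)) * (y*(k:ℚ)) = ((k*((k+1)*t^2 - 1) : ℤ) : ℚ) := by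
    push_cast
    linear_combination (-(k:ℚ)) * hQ1
  have hden1 : (y*(k:ℚ)).den = 1 := by
    have h1 : ((y*(k:ℚ)) * (y*(k:ℚ))).den = 1 := by rw [hqq]; exact Rat.den_intCast _
    have h2 : (y*(k:ℚ)).den * (y*(k:ℚ)).den = 1 := by rw [← Rat.mul_self_den]; exact h1
    exact Nat.eq_one_of_mul_eq_one_right h2
  set z : ℤ := (y*(k:ℚ)).num with hzdef
  have hz : (z:ℚ) = y*(k:ℚ) := (Rat.den_eq_one_iff _).mp hden1
  have hzZ : z^2 = k*((k+1)*t^2-1) := by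
    have h1 : (z:ℚ)^2 = ((k*((k+1)*t^2-1) : ℤ):ℚ) := by rw [sq, hz]; exact hqq
    exact_mod_cast h1
  have heqz : |z|^2 = k*(k+1)*t^2 - k := by rw [sq_abs]; linear_combination hzZ
  obtain ⟨j, hAj, hBj⟩ := classify k hk1 t.toNat t |z|
    (Int.self_le_toNat t) (by linarith) (abs_nonneg z) heqz
  have hj1 : 1 ≤ j := by
    by_contra hc
    push_neg at hc
    interval_cases j
    rw [A_zero] at hAj
    linarith
  have hxK : (x:ℤ) ∣ k+1 := by
    rw [hK]; exact (dvd_pow_self (x:ℤ) hn.ne').mul_left _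
  have hxA : (x:ℤ) ∣ A k j := by rw [← hAj, htdef]; exact dvd_pow_self (x:ℤ) hl.ne'
  have hxm : x ∣ 2*j+1 := by
    obtain ⟨u, hu⟩ := congr1 k j
    have h1 : (x:ℤ) ∣ (-1)^j * (2*(j:ℤ)+1) := by
      have he : (-1:ℤ)^j * (2*(j:ℤ)+1) = A k j - (k+1)*u := by linear_combination -hu
      rw [he]; exact dvd_sub hxA (hxK.mul_right u)
    have h2 : (x:ℤ) ∣ (2*(j:ℤ)+1) := sign_transfer j h1
    have h3 : ((x:ℕ):ℤ) ∣ ((2*j+1:ℕ):ℤ) := by push_cast; exact h2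
    exact_mod_cast h3
  have hxodd : x % 2 = 1 := by
    rcases Nat.even_or_odd x with he|ho
    · exfalso
      obtain ⟨w, hw⟩ := he
      have h2x : 2 ∣ x := ⟨w, by omega⟩
      obtain ⟨c2, hc2⟩ := h2x.trans hxm
      omega
    · obtain ⟨s, hs⟩ := ho
      omega
  have hprime : ∀ p : ℕ, p.Prime → p ∣ x → p = 3 ∧ ¬ ((p:ℤ)^2 ∣ k+1) := by
    intro p hp hpx
    by_contra hcon
    have hH : (p:ℤ)^2 ∣ (k+1) ∨ p ≠ 3 := by tauto
    have hp2 : p ≠ 2 := by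
      intro h2
      subst h2
      obtain ⟨w, hw⟩ := hpx
      omega
    have hpK : (p:ℤ) ∣ k+1 := (Int.natCast_dvd_natCast.mpr hpx).trans hxK
    set c := (2*j+1).factorization p with hcdef
    have hm0 : 2*j+1 ≠ 0 := by omega
    have hcd : p^c ∣ 2*j+1 := Nat.ordProj_dvd _ p
    have hcnd : ¬ p^(c+1) ∣ 2*j+1 := Nat.pow_succ_factorization_not_dvd hm0 hp
    obtain ⟨hdvd, hndvd⟩ := exact_dvd k p hp hp2 hpK hH c j hcd hcnd
    have hlc : l ≤ c := by
      by_contra hlt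
      push_neg at hlt
      apply hndvd
      rw [← hAj, htdef]
      calc (p:ℤ)^(c+1) ∣ (p:ℤ)^l := pow_dvd_pow _ (by omega)
        _ ∣ (x:ℤ)^l := pow_dvd_pow_of_dvd (Int.natCast_dvd_natCast.mpr hpx) l
    have hplm : p^l ∣ 2*j+1 := (pow_dvd_pow p hlc).trans hcd
    have hplle : p^l ≤ 2*j+1 := Nat.le_of_dvd (by omega) hplm
    have hjl : j < l := by
      by_contra hge
      push_neg at hge
      have h1 : (x:ℤ)+1 ≤ 4*k+1 := by linarith
      have h2 : ((x:ℤ)+1)^j ≤ (4*k+1)^j := pow_le_pow_left₀ (by linarith) h1 j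
      have h3 := A_ge_pow k (by linarith) j
      have h4 : (x:ℤ)^j < ((x:ℤ)+1)^j :=
        pow_lt_pow_left₀ (by linarith) (by linarith) (by omega)
      have h5 : (x:ℤ)^l ≤ (x:ℤ)^j := pow_le_pow_right₀ (by linarith) hge
      have h6 : A k j = (x:ℤ)^l := by rw [← hAj, htdef]
      linarith
    have hp3 : 3 ≤ p := by have := hp.two_le; omega
    have hsz : (3:ℕ)^l ≤ p^l := Nat.pow_le_pow_left hp3 l
    have hup : 2*l+1 ≤ 3^l := two_mul_lt l hl
    have hchain : (3:ℕ)^l ≤ 2*j+1 := le_trans hsz hplle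
    linarith
  obtain ⟨p, hp, hpx⟩ := Nat.exists_prime_and_dvd (by omega : x ≠ 1)
  have hp3' := (hprime p hp hpx).1
  rw [hp3'] at hpx
  have h3prime : Nat.Prime 3 := by norm_num
  have hnine : ¬ ((3:ℤ)^2 ∣ k+1) := by
    have := (hprime 3 h3prime hpx).2
    simpa using this
  have hxpow : x = 3 ^ x.primeFactorsList.length :=
    Nat.eq_prime_pow_of_unique_prime_dvd (by omega)
      (fun {d} hd hdx => (hprime d hd hdx).1)
  set i := x.primeFactorsList.length with hidef
  have hi1 : 1 ≤ i := by
    by_contra hc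
    push_neg at hc
    interval_cases i
    rw [pow_zero] at hxpow
    omega
  have hin : i * n = 1 := by
    by_contra hc
    have h2le : 2 ≤ i * n := by
      have h1 : 0 < i * n := Nat.mul_pos hi1 hn
      omega
    apply hnine
    have h9 : (3:ℤ)^2 ∣ (3:ℤ)^(i*n) := pow_dvd_pow _ h2le
    have hxn9 : ((x:ℤ))^n = (3:ℤ)^(i*n) := by
      rw [hxpow]; push_cast; rw [← pow_mul]
    rw [hK]
    exact (h9.trans (by rw [← hxn9])).mul_left _
  have hieq : i = 1 := Nat.eq_one_of_mul_eq_one_right hin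
  have hneq : n = 1 := Nat.eq_one_of_mul_eq_one_left hin
  have hxeq : x = 3 := by rw [hxpow, hieq]; norm_num
  -- endgame
  have hK3 : k + 1 = 3*(a:ℤ) := by rw [hK, hxeq, hneq]; push_cast; ring
  have hk2 : 2 ≤ k := by linarith
  have hA3l : A k j = (3:ℤ)^l := by rw [← hAj, htdef, hxeq]; push_cast; ring
  have h3m : 3 ∣ 2*j+1 := by rw [hxeq] at hxm; exact hxm
  set w := (2*j+1).factorization 3 with hwdef
  set m₀ := (2*j+1) / 3^w with hm₀def
  have hm₀ : 2*j+1 = 3^w * m₀ := (Nat.ordProj_mul_ordCompl_eq_self (2*j+1) 3).symm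
  have h3nm₀ : ¬ 3 ∣ m₀ := Nat.not_dvd_ordCompl h3prime (by omega)
  have hw1 : 1 ≤ w := h3prime.factorization_pos_of_dvd (by omega) h3m
  have hm₀odd : m₀ % 2 = 1 := by
    rcases Nat.even_or_odd m₀ with he|ho
    · exfalso
      obtain ⟨c, hc⟩ := he
      have h2d : 2 ∣ m₀ := ⟨c, by omega⟩
      have h2m : (2:ℕ) ∣ 2*j+1 := by
        rw [hm₀]; exact h2d.mul_left _
      omega
    · obtain ⟨s2, hs2⟩ := ho
      omega
  set j₀ := m₀ / 2 with hj₀def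
  have hm₀eq : m₀ = 2*j₀+1 := by omega
  have h3wodd : (3:ℕ)^w % 2 = 1 := by rw [Nat.pow_mod]; norm_num
  have hdvd₀ : A k j₀ ∣ (3:ℤ)^l := by
    rw [← hA3l]
    apply A_dvd_of_odd_factor k j j₀ (3^w) h3wodd
    rw [hm₀, hm₀eq]; ring
  have h3K : (3:ℤ) ∣ k+1 := by rw [hK3]; exact Dvd.intro _ rfl
  have h3A₀ : ¬ (3:ℤ) ∣ A k j₀ := by
    intro hcc
    apply h3nm₀
    obtain ⟨u, hu⟩ := congr1 k j₀
    have h1 : (3:ℤ) ∣ (-1)^j₀ * (2*(j₀:ℤ)+1) := by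
      have he : (-1:ℤ)^j₀ * (2*(j₀:ℤ)+1) = A k j₀ - (k+1)*u := by linear_combination -hu
      rw [he]; exact dvd_sub hcc (h3K.mul_right u)
    have h2 := sign_transfer j₀ h1
    have h3 : (3:ℕ) ∣ 2*j₀+1 := by
      have h4 : ((3:ℕ):ℤ) ∣ ((2*j₀+1:ℕ):ℤ) := by push_cast; exact h2
      exact_mod_cast h4
    rw [hm₀eq]; exact h3
  obtain ⟨i₀, hi₀l, hi₀⟩ := int_dvd_three_pow l (A_pos k (by linarith) j₀) hdvd₀
  have hi₀0 : i₀ = 0 := by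
    by_contra hcc
    apply h3A₀
    rw [hi₀]
    exact dvd_pow_self 3 hcc
  have hAj₀1 : A k j₀ = 1 := by rw [hi₀, hi₀0]; norm_num
  have hj₀0 : j₀ = 0 := by
    by_contra hcc
    have := one_lt_A k hk1 (j := j₀) (by omega)
    omega
  have hm₀1 : m₀ = 1 := by omega
  have hm3w : 2*j+1 = 3^w := by rw [hm₀, hm₀1]; ring
  have hwne : ¬ 2 ≤ w := by
    intro hw2
    have hdvd1 : A k 1 ∣ (3:ℤ)^l := by
      rw [← hA3l]
      apply A_dvd_of_odd_factor k j 1 (3^(w-1)) (by rw [Nat.pow_mod]; norm_num)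
      rw [hm3w]
      have hww : w - 1 + 1 = w := by omega
      have h31 : (3:ℕ)^w = 3 * 3^(w-1) := by
        conv_lhs => rw [← hww]
        rw [pow_succ']
      rw [h31]; try ring
    obtain ⟨l₁, hl₁l, hl₁⟩ := int_dvd_three_pow l (A_pos k (by linarith) 1) hdvd1
    rw [A_one] at hl₁
    have hl₁2 : 1 ≤ l₁ := by
      rcases Nat.eq_zero_or_pos l₁ with rfl|hpos
      · rw [pow_zero] at hl₁; omega
      · omega
    have hdvd4 : A k 4 ∣ (3:ℤ)^l := by
      rw [← hA3l]
      apply A_dvd_of_odd_factor k j 4 (3^(w-2)) (by rw [Nat.pow_mod]; norm_num)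
      rw [hm3w]
      have hww2 : w - 2 + 2 = w := by omega
      have h32 : (3:ℕ)^w = 3^2 * 3^(w-2) := by
        conv_lhs => rw [← hww2]
        rw [pow_add, Nat.mul_comm]
      rw [h32]; try ring
    have hA4 : A k 4 = A k 1 * (4*(k+1) * A k 1^2 - 3) := by
      have h := triple_law k 1
      norm_num at h
      exact h
    have hGdvd : (4*(k+1) * A k 1^2 - 3) ∣ (3:ℤ)^l := by
      have h1 : (4*(k+1) * A k 1^2 - 3) ∣ A k 4 := by
        rw [hA4]; exact dvd_mul_left _ _
      exact h1.trans hdvd4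
    have hGpos : 1 ≤ 4*(k+1) * A k 1^2 - 3 := by rw [A_one]; exact Gpos_helper k hk2
    obtain ⟨l₂, hl₂l, hl₂⟩ := int_dvd_three_pow l hGpos hGdvd
    have hH1 : (3:ℤ)^l₂ = 3*(4*(a:ℤ)*((3:ℤ)^l₁)^2 - 1) := by
      rw [← hl₂, A_one, ← hl₁]
      linear_combination (4*(4*k+1)^2) * hK3
    have h3le : (3:ℤ) ≤ (3:ℤ)^l₁ := by
      calc (3:ℤ) = 3^1 := (pow_one _).symm
      _ ≤ 3^l₁ := pow_le_pow_right₀ (by norm_num) hl₁2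
    obtain ⟨s, hs⟩ : ∃ s, l₂ = s + 1 := by
      rcases Nat.eq_zero_or_pos l₂ with rfl|hpos
      · exfalso
        rw [pow_zero] at hH1
        exact l20_helper (a:ℤ) ((3:ℤ)^l₁) ha1 h3le hH1
      · exact ⟨l₂ - 1, by omega⟩
    rw [hs, pow_succ'] at hH1
    have hHs : (3:ℤ)^s = 4*(a:ℤ)*((3:ℤ)^l₁)^2 - 1 :=
      mul_left_cancel₀ (by norm_num : (3:ℤ) ≠ 0) hH1
    rcases Nat.eq_zero_or_pos s with rfl|hsp
    · rw [pow_zero] at hHs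
      exact s0_helper (a:ℤ) ((3:ℤ)^l₁) ha1 h3le hHs
    · have h3s : (3:ℤ) ∣ (3:ℤ)^s := dvd_pow_self 3 hsp.ne'
      rw [hHs] at h3s
      have h3l₁ : (3:ℤ) ∣ ((3:ℤ)^l₁) := dvd_pow_self 3 (by omega : l₁ ≠ 0)
      have hd : (3:ℤ) ∣ 4*(a:ℤ)*((3:ℤ)^l₁)^2 := (dvd_pow h3l₁ two_ne_zero).mul_left (4*(a:ℤ))
      have h31 : (3:ℤ) ∣ 1 := by
        have := dvd_sub hd h3s
        simpa using this
      norm_num at h31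
  have hweq : w = 1 := by omega
  have hjeq : j = 1 := by rw [hweq, pow_one] at hm3w; omega
  rw [hjeq, A_one] at hA3l
  rw [hjeq, B_one] at hBj
  have hl2 : 2 ≤ l := by
    by_contra hcc
    push_neg at hcc
    interval_cases l
    rw [pow_one] at hA3l
    linarith
  obtain ⟨l', hl'⟩ : ∃ l', l = l' + 1 := ⟨l-1, by omega⟩
  have h4a : 4*(a:ℤ) - 1 = (3:ℤ)^l' := by
    have h1 : (3:ℤ) * (4*(a:ℤ) - 1) = (3:ℤ) * (3:ℤ)^l' := by
      rw [← pow_succ', ← hl', ← hA3l]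
      linear_combination (-4)*hK3
    exact mul_left_cancel₀ (by norm_num) h1
  have h4aN : 4*a = 3^(l-1) + 1 := by
    have h1 : ((4*a : ℕ):ℤ) = ((3^(l-1) + 1 : ℕ):ℤ) := by
      push_cast
      rw [hl']
      simp only [Nat.add_sub_cancel]
      linarith
    exact_mod_cast h1
  have hl2dvd : 2 ∣ l := by
    rcases Nat.even_or_odd l' with he|ho
    · exfalso
      obtain ⟨s, hs⟩ := he
      have h9e : (3:ℕ)^l' = 9^s := by
        rw [hs, pow_add, ← mul_pow]; norm_num
      have h9 : (3:ℕ)^l' % 4 = 1 := by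
        rw [h9e, Nat.pow_mod]; norm_num
      have hl1' : l - 1 = l' := by omega
      rw [hl1'] at h4aN
      generalize hXX : (3:ℕ)^l' = X at h9 h4aN
      omega
    · obtain ⟨s, hs⟩ := ho
      omega
  refine ⟨hl2dvd, h4aN, hxeq, hneq, ?_⟩
  have hkQ0 : (k:ℚ) ≠ 0 := by
    have : k ≠ 0 := by omega
    exact_mod_cast this
  have h4k3 : (4*k+3 : ℤ) = (3:ℤ)^l + 2 := by linarith
  have h4k3Q : (4*(k:ℚ)+3) = (3:ℚ)^l + 2 := by exact_mod_cast h4k3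
  rcases abs_choice z with hc|hc <;> rw [hc] at hBj
  · left
    have h1 : y * (k:ℚ) = (4*(k:ℚ)+3) * (k:ℚ) := by
      rw [← hz, hBj]; push_cast; ring
    have h2 : y = 4*(k:ℚ)+3 := mul_right_cancel₀ hkQ0 h1
    rw [h2, h4k3Q]
  · right
    have h1 : y * (k:ℚ) = (-(4*(k:ℚ)+3)) * (k:ℚ) := by
      have hBj' : z = -(k * (4*k+3)) := by linarith
      rw [← hz, hBj']; push_cast; ring
    have h2 : y = -(4*(k:ℚ)+3) := mul_right_cancel₀ hkQ0 h1
    rw [h2, h4k3Q]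


end FLSU

/-- Filaseta–Luca–Stănică–Underwood: for positive integers `a, x, n, l` with
`x > 1` and a rational `y`, `(a x^{n+2l} − 1)/(a xⁿ − 1) = y²` holds if and
only if `l` is even, `a = (3^{l−1} + 1)/4`, `x = 3`, `n = 1` and
`y = ±(3^l + 2)`. -/
theorem flsu_equation (a x n l : ℕ) (ha : 0 < a) (hx : 1 < x)
    (hn : 0 < n) (hl : 0 < l) (hne : a * x ^ n ≠ 1) (y : ℚ) :
    ((a : ℚ) * (x : ℚ) ^ (n + 2 * l) - 1) / ((a : ℚ) * (x : ℚ) ^ n - 1) = y ^ 2 ↔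
      (2 ∣ l ∧ 4 * a = 3 ^ (l - 1) + 1 ∧ x = 3 ∧ n = 1 ∧
        (y = 3 ^ l + 2 ∨ y = -(3 ^ l + 2))) := by
  constructor
  · exact FLSU.flsu_forward a x n l ha hx hn hl y
  · rintro ⟨hl2, ha4, rfl, rfl, hy⟩
    obtain ⟨l', rfl⟩ : ∃ l', l = l' + 1 := ⟨l-1, by omega⟩
    have ha4Q : (4:ℚ)*a = 3^l' + 1 := by
      have h1 : ((4*a : ℕ):ℚ) = ((3^(l'+1-1)+1 : ℕ):ℚ) := by exact_mod_cast congrArg (Nat.cast : ℕ → ℚ) ha4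
      rw [Nat.add_sub_cancel] at h1
      push_cast at h1
      linarith
    have haQ1 : (1:ℚ) ≤ (a:ℚ) := by exact_mod_cast ha
    have hden : (a:ℚ) * ((3:ℕ):ℚ) ^ 1 - 1 ≠ 0 := by
      push_cast
      intro hc
      nlinarith
    rw [div_eq_iff hden]
    rcases hy with rfl|rfl <;> push_cast <;>
      linear_combination (-3*(3*(3:ℚ)^l'+1)) * ha4Q
end
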